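/- arXiv:1703.04764 — 10 statements merged into one kernel-verified Lean document; each statement's English description precedes it below -/
import Mathlib

section
/- Let G be a simple graph in which every set of three distinct vertices induces an odd number of edges. Then every connected component of G is a complete graph, and G has at most two connected components (provided G has at least 3 vertices). -/
/-- If every three distinct vertices of `G` induce an odd number of edges, then
every connected component of `G` is complete, and (when `G` has at least 3
vertices) `G` has at most two connected components. -/
theorem stmt2 {V : Type*} [Fintype V] [DecidableEq V] (G : SimpleGraph V)
    [DecidableRel G.Adj]
    (h : ∀ a b c : V, a ≠ b → b ≠ c → a ≠ c →
      Odd ((if G.Adj a b then 1 else 0) + (if G.Adj b c then 1 else 0) +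
        (if G.Adj a c then 1 else 0)))
    (hV : 3 ≤ Fintype.card V) :
    (∀ u v : V, G.Reachable u v → u ≠ v → G.Adj u v) ∧
    (∀ u v w : V, G.Reachable u v ∨ G.Reachable v w ∨ G.Reachable u w) := by
  have htrans : ∀ a b c : V, G.Adj a b → G.Adj b c → a ≠ c → G.Adj a c := by
    intro a b c hab hbc hac
    by_contra hnac
    have := h a b c hab.ne hbc.ne hac
    simp [hab, hbc, hnac] at this; exact (Nat.not_odd_iff_even.2 (by norm_num)) this
  have hwalk : ∀ u v : V, G.Walk u v → u = v ∨ G.Adj u v := by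
    intro u v p
    induction p with
    | nil => exact Or.inl rfl
    | @cons a b c h' p ih =>
      rcases ih with rfl | hadj
      · exact Or.inr h'
      · by_cases he : a = c
        · exact Or.inl he
        · exact Or.inr (htrans _ _ _ h' hadj he)
  constructor
  · intro u v hr hne
    rcases hwalk u v hr.some with rfl | hadj
    · exact absurd rfl hne
    · exact hadj
  · intro u v w
    by_cases huv : u = v
    · exact Or.inl (huv ▸ SimpleGraph.Reachable.refl u)
    by_cases hvw : v = w
    · exact Or.inr (Or.inl (hvw ▸ SimpleGraph.Reachable.refl v))
    by_cases huw : u = w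
    · exact Or.inr (Or.inr (huw ▸ SimpleGraph.Reachable.refl u))
    have := h u v w huv hvw huw
    by_cases h1 : G.Adj u v
    · exact Or.inl h1.reachable
    by_cases h2 : G.Adj v w
    · exact Or.inr (Or.inl h2.reachable)
    by_cases h3 : G.Adj u w
    · exact Or.inr (Or.inr h3.reachable)
    simp [h1, h2, h3] at this
end

section
/- For k ≥ 3 and any n, the number of plausible τ-parities is exactly 2^(C(k,2) − 1). Equivalently: the set of vectors (τ^c_{ij}) ∈ Z₂^{k(k−1)(k−2)} indexed by ordered triples of distinct elements of [1,k], satisfying (a) τ^c_{ij} = τ^c_{ji}, (b) τ^c_{ij} = τ^c_{iℓ} + τ^c_{ℓj} for all distinct c,i,j,ℓ, and (c) τ^c_{ij} + τ^i_{cj} + τ^j_{ci} = C(n,2) mod 2 for all distinct c,i,j, has cardinality 2^(C(k,2)−1). -/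
namespace Stmt4Aux

variable {k : ℕ} [NeZero k]
set_option linter.unusedSectionVars false

def dd (ε : ZMod 2) (c i : Fin k) : ZMod 2 := if c < i then ε else 0

lemma htwo : (2 : ZMod 2) = 0 := by decide

lemma dd_add_dd (ε : ZMod 2) {c i : Fin k} (h : c ≠ i) :
    dd ε c i + dd ε i c = ε := by
  rcases lt_or_gt_of_ne h with h' | h'
  · rw [dd, dd, if_pos h', if_neg (asymm h'), add_zero]
  · rw [dd, dd, if_neg (asymm h'), if_pos h', zero_add]

abbrev Pairs (k : ℕ) [NeZero k] :=
  {p : Fin k × Fin k // p.1 < p.2 ∧ p ≠ ((0 : Fin k), (1 : Fin k))}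

def sig (f : Pairs k → ZMod 2) (a b : Fin k) : ZMod 2 :=
  if h : a < b ∧ (a, b) ≠ ((0 : Fin k), (1 : Fin k)) then f ⟨(a, b), h⟩
  else if h' : b < a ∧ (b, a) ≠ ((0 : Fin k), (1 : Fin k)) then f ⟨(b, a), h'⟩
  else 0

lemma sig_symm (f : Pairs k → ZMod 2) (a b : Fin k) : sig f a b = sig f b a := by
  unfold sig
  rcases lt_trichotomy a b with h | h | h
  · simp only [dif_neg (fun hx : b < a ∧ _ => absurd h (asymm hx.1))]
  · subst h
    simp only [dif_neg (fun hx : a < a ∧ _ => absurd hx.1 (lt_irrefl a))]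
  · simp only [dif_neg (fun hx : a < b ∧ _ => absurd h (asymm hx.1))]

lemma sig_01 (f : Pairs k → ZMod 2) : sig f 0 1 = 0 := by
  unfold sig
  rw [dif_neg (by simp), dif_neg]
  rintro ⟨h, -⟩
  exact absurd h (by simp [Fin.lt_def])

lemma sig_lt (f : Pairs k → ZMod 2) {a b : Fin k} (h : a < b)
    (hne : (a, b) ≠ ((0 : Fin k), (1 : Fin k))) : sig f a b = f ⟨(a, b), h, hne⟩ := by
  rw [sig, dif_pos ⟨h, hne⟩]

lemma zero_lt_one' (hk : 3 ≤ k) : (0 : Fin k) < 1 := by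
  obtain ⟨m, rfl⟩ : ∃ m, k = m + 3 := ⟨k - 3, by omega⟩
  simp [Fin.lt_def]

lemma zero_ne_one' (hk : 3 ≤ k) : (0 : Fin k) ≠ 1 := ne_of_lt (zero_lt_one' hk)

def tofun (ε : ZMod 2) (f : Pairs k → ZMod 2) (c i j : Fin k) : ZMod 2 :=
  if c ≠ i ∧ c ≠ j ∧ i ≠ j then sig f c i + sig f c j + dd ε c i + dd ε c j else 0

def Tt (ε : ZMod 2) (τ : Fin k → Fin k → Fin k → ZMod 2) (c i j : Fin k) : ZMod 2 :=
  τ c i j + dd ε c i + dd ε c j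

def Vv (ε : ZMod 2) (τ : Fin k → Fin k → Fin k → ZMod 2) (x : Fin k) : ZMod 2 :=
  if x = 1 then 0 else Tt ε τ 0 x 1

def Sg (ε : ZMod 2) (τ : Fin k → Fin k → Fin k → ZMod 2) (a b : Fin k) : ZMod 2 :=
  if a = 0 then Vv ε τ b else if b = 0 then Vv ε τ a else Tt ε τ a b 0 + Vv ε τ a

def invfun (ε : ZMod 2) (τ : Fin k → Fin k → Fin k → ZMod 2) (p : Pairs k) : ZMod 2 :=
  Sg ε τ p.1.1 p.1.2

lemma Tt_tofun (ε : ZMod 2) (f : Pairs k → ZMod 2) {c i j : Fin k}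
    (hci : c ≠ i) (hcj : c ≠ j) (hij : i ≠ j) :
    Tt ε (tofun ε f) c i j = sig f c i + sig f c j := by
  unfold Tt tofun
  rw [if_pos ⟨hci, hcj, hij⟩]
  linear_combination (dd ε c i + dd ε c j) * htwo

section FromAxioms

variable (ε : ZMod 2) (τ : Fin k → Fin k → Fin k → ZMod 2)

variable (hs : ∀ c i j : Fin k, c ≠ i → c ≠ j → i ≠ j → τ c i j = τ c j i)
  (hb : ∀ c i j l : Fin k, c ≠ i → c ≠ j → c ≠ l → i ≠ j → i ≠ l → j ≠ l →
        τ c i j = τ c i l + τ c l j)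
  (hc : ∀ c i j : Fin k, c ≠ i → c ≠ j → i ≠ j →
        τ c i j + τ i c j + τ j c i = ε)

include hs in
lemma Ta {c i j : Fin k} (hci : c ≠ i) (hcj : c ≠ j) (hij : i ≠ j) :
    Tt ε τ c i j = Tt ε τ c j i := by
  unfold Tt; rw [hs c i j hci hcj hij]; ring

include hb in
lemma Tb {c i j l : Fin k} (h1 : c ≠ i) (h2 : c ≠ j) (h3 : c ≠ l) (h4 : i ≠ j)
    (h5 : i ≠ l) (h6 : j ≠ l) : Tt ε τ c i j = Tt ε τ c i l + Tt ε τ c l j := by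
  unfold Tt
  linear_combination hb c i j l h1 h2 h3 h4 h5 h6 - dd ε c l * htwo

include hc in
lemma Tc {c i j : Fin k} (hci : c ≠ i) (hcj : c ≠ j) (hij : i ≠ j) :
    Tt ε τ c i j + Tt ε τ i c j + Tt ε τ j c i = 0 := by
  unfold Tt
  linear_combination hc c i j hci hcj hij + dd_add_dd ε hci + dd_add_dd ε hcj +
    dd_add_dd ε hij + (2 * ε) * htwo

include hc in
lemma TL1 {a b x : Fin k} (hab : a ≠ b) (hax : a ≠ x) (hbx : b ≠ x) :
    Tt ε τ a b x + Tt ε τ b a x = Tt ε τ x a b := by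
  linear_combination Tc ε τ hc hab hax hbx - Tt ε τ x a b * htwo

include hs hb in
lemma Key0 (hk : 3 ≤ k) {i j : Fin k} (hi : i ≠ 0) (hj : j ≠ 0) (hij : i ≠ j) :
    Tt ε τ 0 i j = Vv ε τ i + Vv ε τ j := by
  have h01 : (0 : Fin k) ≠ 1 := zero_ne_one' hk
  by_cases hi1 : i = 1
  · subst hi1
    have e1 : Vv ε τ 1 = 0 := by simp [Vv]
    have e2 : Vv ε τ j = Tt ε τ 0 j 1 := by simp [Vv, Ne.symm hij]
    rw [e1, e2, zero_add]
    exact Ta ε τ hs h01 (Ne.symm hj) hij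
  · by_cases hj1 : j = 1
    · subst hj1
      have e1 : Vv ε τ 1 = 0 := by simp [Vv]
      have e2 : Vv ε τ i = Tt ε τ 0 i 1 := by simp [Vv, hi1]
      rw [e1, e2, add_zero]
    · have e1 : Vv ε τ i = Tt ε τ 0 i 1 := by simp [Vv, hi1]
      have e2 : Vv ε τ j = Tt ε τ 0 j 1 := by simp [Vv, hj1]
      have e3 : Tt ε τ 0 i j = Tt ε τ 0 i 1 + Tt ε τ 0 1 j :=
        Tb ε τ hb (Ne.symm hi) (Ne.symm hj) h01 hij hi1 hj1
      have e4 : Tt ε τ 0 1 j = Tt ε τ 0 j 1 := Ta ε τ hs h01 (Ne.symm hj) (Ne.symm hj1)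
      rw [e1, e2, e3, e4]

include hs hb in
lemma KeyMain (hk : 3 ≤ k) {c i j : Fin k} (hci : c ≠ i) (hcj : c ≠ j) (hij : i ≠ j) :
    Tt ε τ c i j = Sg ε τ c i + Sg ε τ c j := by
  by_cases hc0 : c = 0
  · subst hc0
    have e1 : Sg ε τ 0 i = Vv ε τ i := by simp [Sg]
    have e2 : Sg ε τ 0 j = Vv ε τ j := by simp [Sg]
    rw [e1, e2]
    exact Key0 ε τ hs hb hk (Ne.symm hci) (Ne.symm hcj) hij
  · by_cases hi0 : i = 0
    · subst hi0
      have e1 : Sg ε τ c 0 = Vv ε τ c := by simp [Sg, hc0]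
      have e2 : Sg ε τ c j = Tt ε τ c j 0 + Vv ε τ c := by
        simp [Sg, hc0, Ne.symm hij]
      have e3 : Tt ε τ c 0 j = Tt ε τ c j 0 := Ta ε τ hs hci hcj hij
      rw [e1, e2]
      linear_combination e3 - Vv ε τ c * htwo
    · by_cases hj0 : j = 0
      · subst hj0
        have e1 : Sg ε τ c 0 = Vv ε τ c := by simp [Sg, hc0]
        have e2 : Sg ε τ c i = Tt ε τ c i 0 + Vv ε τ c := by simp [Sg, hc0, hi0]
        rw [e1, e2]
        linear_combination -(Vv ε τ c) * htwo
      · have e1 : Sg ε τ c i = Tt ε τ c i 0 + Vv ε τ c := by simp [Sg, hc0, hi0]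
        have e2 : Sg ε τ c j = Tt ε τ c j 0 + Vv ε τ c := by simp [Sg, hc0, hj0]
        have e3 : Tt ε τ c i j = Tt ε τ c i 0 + Tt ε τ c 0 j :=
          Tb ε τ hb hci hcj hc0 hij hi0 hj0
        have e4 : Tt ε τ c 0 j = Tt ε τ c j 0 := Ta ε τ hs hc0 hcj (Ne.symm hj0)
        rw [e1, e2]
        linear_combination e3 + e4 - Vv ε τ c * htwo

include hs hb hc in
lemma Sg_symm (hk : 3 ≤ k) {a b : Fin k} (hab : a ≠ b) : Sg ε τ a b = Sg ε τ b a := by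
  by_cases ha0 : a = 0
  · subst ha0
    simp [Sg, Ne.symm hab]
  · by_cases hb0 : b = 0
    · subst hb0
      simp [Sg, ha0]
    · have e1' : Sg ε τ a b = Tt ε τ a b 0 + Vv ε τ a := by simp [Sg, ha0, hb0]
      have e2' : Sg ε τ b a = Tt ε τ b a 0 + Vv ε τ b := by simp [Sg, ha0, hb0]
      have e1 : Tt ε τ a b 0 + Tt ε τ b a 0 = Tt ε τ 0 a b := TL1 ε τ hc hab ha0 hb0
      have e2 : Tt ε τ 0 a b = Vv ε τ a + Vv ε τ b := Key0 ε τ hs hb hk ha0 hb0 hab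
      rw [e1', e2']
      linear_combination e1 + e2 + (Vv ε τ a - Tt ε τ b a 0) * htwo

include hs hb hc in
lemma sig_invfun (hk : 3 ≤ k) {a b : Fin k} (hab : a ≠ b) :
    sig (invfun ε τ) a b = Sg ε τ a b := by
  unfold sig
  rcases lt_trichotomy a b with h | h | h
  · by_cases hne : (a, b) ≠ ((0 : Fin k), (1 : Fin k))
    · rw [dif_pos ⟨h, hne⟩]; rfl
    · push_neg at hne
      rw [Prod.mk.injEq] at hne
      obtain ⟨ha, hb'⟩ := hne
      subst ha; subst hb'
      rw [dif_neg (by simp), dif_neg (by rintro ⟨h', -⟩; exact absurd h' (asymm h))]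
      simp [Sg, Vv]
  · exact absurd h hab
  · rw [dif_neg (by rintro ⟨h', -⟩; exact absurd h' (asymm h))]
    by_cases hne : (b, a) ≠ ((0 : Fin k), (1 : Fin k))
    · rw [dif_pos ⟨h, hne⟩]
      exact Sg_symm ε τ hs hb hc hk (Ne.symm hab)
    · push_neg at hne
      rw [Prod.mk.injEq] at hne
      obtain ⟨hb', ha⟩ := hne
      subst hb'; subst ha
      rw [dif_neg (by simp)]
      simp [Sg, Vv, hab]

end FromAxioms

section Mem

variable (ε : ZMod 2) (f : Pairs k → ZMod 2)

lemma mem1 (c i j : Fin k) (h : ¬(c ≠ i ∧ c ≠ j ∧ i ≠ j)) : tofun ε f c i j = 0 :=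
  if_neg h

lemma mem2 (c i j : Fin k) (h1 : c ≠ i) (h2 : c ≠ j) (h3 : i ≠ j) :
    tofun ε f c i j = tofun ε f c j i := by
  unfold tofun
  rw [if_pos ⟨h1, h2, h3⟩, if_pos ⟨h2, h1, Ne.symm h3⟩]
  ring

lemma mem3 (c i j l : Fin k) (h1 : c ≠ i) (h2 : c ≠ j) (h3 : c ≠ l) (h4 : i ≠ j)
    (h5 : i ≠ l) (h6 : j ≠ l) :
    tofun ε f c i j = tofun ε f c i l + tofun ε f c l j := by
  unfold tofun
  rw [if_pos ⟨h1, h2, h4⟩, if_pos ⟨h1, h3, h5⟩, if_pos ⟨h3, h2, Ne.symm h6⟩]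
  linear_combination -(sig f c l + dd ε c l) * htwo

lemma mem4 (c i j : Fin k) (h1 : c ≠ i) (h2 : c ≠ j) (h3 : i ≠ j) :
    tofun ε f c i j + tofun ε f i c j + tofun ε f j c i = ε := by
  unfold tofun
  rw [if_pos ⟨h1, h2, h3⟩, if_pos ⟨Ne.symm h1, h3, h2⟩, if_pos ⟨Ne.symm h2, Ne.symm h3, h1⟩,
    sig_symm f i c, sig_symm f j c, sig_symm f j i]
  linear_combination dd_add_dd ε h1 + dd_add_dd ε h2 + dd_add_dd ε h3 +
    (sig f c i + sig f c j + sig f i j + ε) * htwo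

end Mem

lemma left_inv_lemma (hk : 3 ≤ k) (ε : ZMod 2) (f : Pairs k → ZMod 2) :
    invfun ε (tofun ε f) = f := by
  funext p
  obtain ⟨⟨a, b⟩, hlt, hne⟩ := p
  have h01 : (0 : Fin k) ≠ 1 := zero_ne_one' hk
  have h01lt : (0 : Fin k) < 1 := zero_lt_one' hk
  show Sg ε (tofun ε f) a b = f ⟨(a, b), hlt, hne⟩
  by_cases ha0 : a = 0
  · subst ha0
    have hb1 : b ≠ 1 := by rintro rfl; exact hne rfl
    have e0 : Sg ε (tofun ε f) 0 b = Vv ε (tofun ε f) b := by simp [Sg]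
    have e1 : Vv ε (tofun ε f) b = Tt ε (tofun ε f) 0 b 1 := by simp [Vv, hb1]
    rw [e0, e1, Tt_tofun ε f hlt.ne h01 hb1, sig_01, add_zero, sig_lt f hlt hne]
  · by_cases ha1 : a = 1
    · subst ha1
      have h10 : (1 : Fin k) ≠ 0 := Ne.symm h01
      have hb0 : b ≠ 0 := (lt_trans h01lt hlt).ne'
      have e0 : Sg ε (tofun ε f) 1 b = Tt ε (tofun ε f) 1 b 0 + Vv ε (tofun ε f) 1 := by
        simp [Sg, h10, hb0]
      have e1 : Vv ε (tofun ε f) 1 = 0 := by simp [Vv]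
      rw [e0, e1, add_zero, Tt_tofun ε f hlt.ne h10 hb0, sig_symm f 1 0, sig_01, add_zero,
        sig_lt f hlt hne]
    · have ha0' : (0 : Fin k) < a := (Fin.pos_iff_ne_zero' a).mpr ha0
      have hb0 : b ≠ 0 := (lt_trans ha0' hlt).ne'
      have e0 : Sg ε (tofun ε f) a b = Tt ε (tofun ε f) a b 0 + Vv ε (tofun ε f) a := by
        simp [Sg, ha0, hb0]
      have e1 : Vv ε (tofun ε f) a = Tt ε (tofun ε f) 0 a 1 := by simp [Vv, ha1]
      rw [e0, e1, Tt_tofun ε f hlt.ne ha0 hb0, Tt_tofun ε f (Ne.symm ha0) h01 ha1,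
        sig_01, add_zero, sig_symm f a 0, sig_lt f hlt hne]
      linear_combination sig f 0 a * htwo

lemma right_inv_lemma (hk : 3 ≤ k) (ε : ZMod 2) (τ : Fin k → Fin k → Fin k → ZMod 2)
    (h0 : ∀ c i j : Fin k, ¬(c ≠ i ∧ c ≠ j ∧ i ≠ j) → τ c i j = 0)
    (hs : ∀ c i j : Fin k, c ≠ i → c ≠ j → i ≠ j → τ c i j = τ c j i)
    (hb : ∀ c i j l : Fin k, c ≠ i → c ≠ j → c ≠ l → i ≠ j → i ≠ l → j ≠ l →
        τ c i j = τ c i l + τ c l j)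
    (hc : ∀ c i j : Fin k, c ≠ i → c ≠ j → i ≠ j →
        τ c i j + τ i c j + τ j c i = ε) :
    tofun ε (invfun ε τ) = τ := by
  funext c i j
  by_cases hd : c ≠ i ∧ c ≠ j ∧ i ≠ j
  · obtain ⟨h1, h2, h3⟩ := hd
    unfold tofun
    rw [if_pos ⟨h1, h2, h3⟩, sig_invfun ε τ hs hb hc hk h1, sig_invfun ε τ hs hb hc hk h2]
    have km : τ c i j + dd ε c i + dd ε c j = Sg ε τ c i + Sg ε τ c j :=
      KeyMain ε τ hs hb hk h1 h2 h3
    linear_combination (dd ε c i + dd ε c j) * htwo - km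
  · rw [tofun, if_neg hd, h0 c i j hd]

lemma card_pairs (hk : 3 ≤ k) : Nat.card (Pairs k) = k.choose 2 - 1 := by
  have e : {p : Fin k × Fin k // p.1 < p.2} ≃ (Σ j : Fin k, Fin j.val) :=
    { toFun := fun p => ⟨p.1.2, ⟨p.1.1.val, p.2⟩⟩
      invFun := fun x => ⟨(⟨x.2.val, x.2.isLt.trans x.1.isLt⟩, x.1), x.2.isLt⟩
      left_inv := fun ⟨⟨a, b⟩, h⟩ => rfl
      right_inv := fun ⟨j, i⟩ => rfl }
  have h2 : Fintype.card {p : Fin k × Fin k // p.1 < p.2} = k.choose 2 := by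
    rw [Fintype.card_congr e, Fintype.card_sigma]
    simp only [Fintype.card_fin]
    rw [Fin.sum_univ_eq_sum_range (fun i => i) k, Finset.sum_range_id, Nat.choose_two_right]
  rw [Nat.card_eq_fintype_card, Fintype.card_subtype]
  have hf : (Finset.univ.filter
        fun p : Fin k × Fin k => p.1 < p.2 ∧ p ≠ ((0 : Fin k), (1 : Fin k)))
      = (Finset.univ.filter fun p : Fin k × Fin k => p.1 < p.2).erase
          ((0 : Fin k), (1 : Fin k)) := by
    ext p
    simp only [Finset.mem_filter, Finset.mem_erase, Finset.mem_univ, true_and]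
    tauto
  rw [hf, Finset.card_erase_of_mem (by simp [zero_lt_one' hk]), ← Fintype.card_subtype, h2]

end Stmt4Aux

/-- There are exactly `2^(C(k,2)-1)` plausible τ-parities for parameters `(k,n)`:
vectors `(τ^c_{ij})` over `Z₂`, indexed by ordered triples of distinct elements
of `[1,k]` (normalised to `0` off such triples), satisfying symmetry in the lower
indices, the fixed-column relation, and the triple relation with `ε = C(n,2)`. -/
theorem stmt4 (k n : ℕ) (hk : 3 ≤ k) :
    Nat.card {τ : Fin k → Fin k → Fin k → ZMod 2 //
      (∀ c i j : Fin k, ¬(c ≠ i ∧ c ≠ j ∧ i ≠ j) → τ c i j = 0) ∧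
      (∀ c i j : Fin k, c ≠ i → c ≠ j → i ≠ j → τ c i j = τ c j i) ∧
      (∀ c i j l : Fin k, c ≠ i → c ≠ j → c ≠ l → i ≠ j → i ≠ l → j ≠ l →
        τ c i j = τ c i l + τ c l j) ∧
      (∀ c i j : Fin k, c ≠ i → c ≠ j → i ≠ j →
        τ c i j + τ i c j + τ j c i = (n.choose 2 : ZMod 2))} =
    2 ^ (k.choose 2 - 1) := by
  haveI : NeZero k := ⟨by omega⟩
  set ε : ZMod 2 := (n.choose 2 : ZMod 2) with hε
  let e : (Stmt4Aux.Pairs k → ZMod 2) ≃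
      {τ : Fin k → Fin k → Fin k → ZMod 2 //
      (∀ c i j : Fin k, ¬(c ≠ i ∧ c ≠ j ∧ i ≠ j) → τ c i j = 0) ∧
      (∀ c i j : Fin k, c ≠ i → c ≠ j → i ≠ j → τ c i j = τ c j i) ∧
      (∀ c i j l : Fin k, c ≠ i → c ≠ j → c ≠ l → i ≠ j → i ≠ l → j ≠ l →
        τ c i j = τ c i l + τ c l j) ∧
      (∀ c i j : Fin k, c ≠ i → c ≠ j → i ≠ j →
        τ c i j + τ i c j + τ j c i = ε)} :=
    { toFun := fun f => ⟨Stmt4Aux.tofun ε f,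
        Stmt4Aux.mem1 ε f, Stmt4Aux.mem2 ε f, Stmt4Aux.mem3 ε f, Stmt4Aux.mem4 ε f⟩
      invFun := fun τ => Stmt4Aux.invfun ε τ.1
      left_inv := fun f => Stmt4Aux.left_inv_lemma hk ε f
      right_inv := fun τ => Subtype.ext
        (Stmt4Aux.right_inv_lemma hk ε τ.1 τ.2.1 τ.2.2.1 τ.2.2.2.1 τ.2.2.2.2) }
  rw [Nat.card_congr e.symm, Nat.card_fun, Nat.card_zmod, Stmt4Aux.card_pairs hk]
end

section
/- Let A be an OA(k,n) and define σ_ij as the permutation of Λ² sending r to (a_{ri}, a_{rj}), and τ^c_{ij} = π(σ_{ci} σ_{cj}) ∈ Z₂ (sum of signs). Then for any l ≥ 3 distinct columns c₁,...,c_l of A, the cyclic sum τ^{c₁}_{c_l c₂} + τ^{c₂}_{c₁ c₃} + ... + τ^{c_l}_{c_{l−1} c₁} equals l·C(n,2) mod 2. -/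
/-!
Writing `swap` for the coordinate swap of `Λ × Λ`, we have `σ_ji = swap ∘ σ_ij`. The involution
`swap` fixes exactly the `n` diagonal points, so it is a product of `(n² - n) / 2 = C(n,2)`
disjoint transpositions, whence `π(σ_ji) = π(σ_ij) + C(n,2)`. Expanding every `τ` in the cyclic
sum, each of the `l` consecutive pairs of columns contributes `π(σ_{c_i c_{i+1}}) + π(σ_{c_{i+1} c_i})
= C(n,2)`.
-/

/-- The parity (in `Z₂`) of a permutation. -/
def permParity {α : Type*} [Fintype α] [DecidableEq α] (σ : Equiv.Perm α) : ZMod 2 :=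
  if Equiv.Perm.sign σ = 1 then 0 else 1

open Equiv

section PermParity

variable {α : Type*} [Fintype α] [DecidableEq α]

lemma permParity_mul (σ τ : Perm α) :
    permParity (σ * τ) = permParity σ + permParity τ := by
  rcases Int.units_eq_one_or (Perm.sign σ) with hσ | hσ <;>
    rcases Int.units_eq_one_or (Perm.sign τ) with hτ | hτ <;>
    simp [permParity, hσ, hτ]
  all_goals decide

lemma permParity_of_sign_eq_neg_one_pow {σ : Perm α} {m : ℕ} (h : Perm.sign σ = (-1) ^ m) :
    permParity σ = m := by
  unfold permParity
  rcases Nat.even_or_odd m with hm | hm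
  · rw [h, hm.neg_one_pow, if_pos rfl, eq_comm, ZMod.natCast_eq_zero_iff]
    exact hm.two_dvd
  · rw [h, hm.neg_one_pow, if_neg (by decide), ZMod.natCast_eq_one_iff_odd.mpr hm]

end PermParity

section ProdComm

lemma prodComm_sq (Λ : Type*) : (prodComm Λ Λ : Perm (Λ × Λ)) ^ 2 = 1 := by
  ext ⟨x, y⟩ <;> rfl

variable (Λ : Type*) [Fintype Λ] [DecidableEq Λ]

def fixedPointsProdCommEquiv : Function.fixedPoints (prodComm Λ Λ) ≃ Λ where
  toFun p := p.1.1
  invFun x := ⟨(x, x), rfl⟩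
  left_inv := fun ⟨(x, y), h⟩ => by
    have hxy : y = x := congrArg Prod.fst h
    subst hxy
    rfl
  right_inv _ := rfl

lemma sign_prodComm :
    Perm.sign (prodComm Λ Λ : Perm (Λ × Λ)) = (-1) ^ (Fintype.card Λ).choose 2 := by
  rw [Perm.sign_of_pow_two_eq_one (prodComm_sq Λ),
    Fintype.card_congr (fixedPointsProdCommEquiv Λ), Fintype.card_prod,
    Nat.choose_two_right, Nat.mul_sub_one]

lemma permParity_prodComm :
    permParity (prodComm Λ Λ : Perm (Λ × Λ)) = ((Fintype.card Λ).choose 2 : ℕ) :=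
  permParity_of_sign_eq_neg_one_pow (sign_prodComm Λ)

end ProdComm

lemma permParity_of_apply_eq_swap {Λ : Type*} [Fintype Λ] [DecidableEq Λ]
    {σ τ : Perm (Λ × Λ)} (h : ∀ r, τ r = (σ r).swap) :
    permParity τ = ((Fintype.card Λ).choose 2 : ℕ) + permParity σ := by
  have hτ : τ = prodComm Λ Λ * σ := Equiv.ext h
  rw [hτ, permParity_mul, permParity_prodComm]

/-- For an `OA(k,n)` with `σ_{ij}(r) = (a r i, a r j)` and
`τ^c_{ij} = π(σ_{ci} σ_{cj})`, the cyclic sum of `τ`-parities over `l ≥ 3`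
distinct columns `c₁, …, c_l` equals `l·C(n,2)` mod 2. -/
theorem stmt5 {Λ : Type*} [Fintype Λ] [DecidableEq Λ] (n k l : ℕ) [NeZero l]
    (hl : 3 ≤ l) (hcard : Fintype.card Λ = n)
    (a : Λ × Λ → Fin k → Λ)
    (σA : Fin k → Fin k → Equiv.Perm (Λ × Λ))
    (hσ : ∀ i j : Fin k, i ≠ j → ∀ r : Λ × Λ, σA i j r = (a r i, a r j))
    (c : Fin l → Fin k) (hc : Function.Injective c) :
    ∑ i : Fin l, permParity (σA (c i) (c (i - 1)) * σA (c i) (c (i + 1))) =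
      ((l * n.choose 2 : ℕ) : ZMod 2) := by
  have hswap : ∀ i : Fin l, permParity (σA (c (i + 1)) (c i)) =
      (n.choose 2 : ℕ) + permParity (σA (c i) (c (i + 1))) := by
    intro i
    have hne : c i ≠ c (i + 1) :=
      hc.ne (by simp only [ne_eq, left_eq_add, Fin.one_eq_zero_iff]; omega)
    rw [← hcard]
    exact permParity_of_apply_eq_swap fun r => by rw [hσ _ _ hne, hσ _ _ hne.symm]; rfl
  have hshift : ∑ i : Fin l, permParity (σA (c i) (c (i - 1))) =
      ∑ i : Fin l, permParity (σA (c (i + 1)) (c i)) :=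
    Fintype.sum_equiv (Equiv.subRight 1) _ _ fun i => by simp
  simp_rw [permParity_mul, Finset.sum_add_distrib, hshift, hswap, Finset.sum_add_distrib]
  rw [add_assoc, CharTwo.add_self_eq_zero, add_zero, Finset.sum_const, Finset.card_univ, Fintype.card_fin,
    nsmul_eq_mul, Nat.cast_mul]
end

section
/- Fix n ≥ 2. The number of PP-plausible τ-parities for an OA(n+1,n) is 2^C(n,2) if n is odd and 2^(C(n,2)−1) if n is even. -/
open Finset

namespace Stmt8Aux

lemma sum_ite_lt {k : ℕ} (a : Fin k) (x : ZMod 2) :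
    ∑ b : Fin k, (if b < a then x else 0) = (a.val : ZMod 2) * x := by
  classical
  rw [← Finset.sum_filter]
  have h : (univ.filter (fun b : Fin k => b < a)) = Finset.Iio a := by ext b; simp
  rw [h, Finset.sum_const, Fin.card_Iio, nsmul_eq_mul]

lemma pairsum {k : ℕ} (f : Fin k → Fin k → ZMod 2) (hd : ∀ i, f i i = 0) :
    ∑ i, ∑ j, f i j =
      ∑ x ∈ (univ ×ˢ univ).filter (fun x : Fin k × Fin k => x.1 < x.2),
        (f x.1 x.2 + f x.2 x.1) := by
  classical
  rw [← Finset.sum_product']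
  rw [← Finset.sum_filter_add_sum_filter_not (univ ×ˢ univ)
    (fun x : Fin k × Fin k => x.1 < x.2) (fun x => f x.1 x.2)]
  rw [← Finset.sum_filter_add_sum_filter_not
    ((univ ×ˢ univ).filter (fun x : Fin k × Fin k => ¬ x.1 < x.2))
    (fun x : Fin k × Fin k => x.2 < x.1) (fun x => f x.1 x.2)]
  have h1 : ((univ ×ˢ univ).filter (fun x : Fin k × Fin k => ¬ x.1 < x.2)).filter
      (fun x : Fin k × Fin k => x.2 < x.1)
      = (univ ×ˢ univ).filter (fun x : Fin k × Fin k => x.2 < x.1) := by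
    ext x
    simp only [Finset.mem_filter, Finset.mem_product, Finset.mem_univ, true_and, Fin.lt_def]
    omega
  have h2 : ∑ x ∈ (((univ ×ˢ univ).filter (fun x : Fin k × Fin k => ¬ x.1 < x.2)).filter
      (fun x : Fin k × Fin k => ¬ x.2 < x.1)), f x.1 x.2 = 0 := by
    apply Finset.sum_eq_zero
    intro x hx
    simp only [Finset.mem_filter, not_lt] at hx
    have : x.1 = x.2 := le_antisymm hx.2 hx.1.2
    rw [this]; exact hd _
  rw [h1, h2, add_zero]
  have h3 : ∑ x ∈ (univ ×ˢ univ).filter (fun x : Fin k × Fin k => x.2 < x.1), f x.1 x.2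
      = ∑ x ∈ (univ ×ˢ univ).filter (fun x : Fin k × Fin k => x.1 < x.2), f x.2 x.1 := by
    apply Finset.sum_equiv (Equiv.prodComm (Fin k) (Fin k))
    · intro x
      simp [Finset.mem_filter]
    · intro x _
      rfl
  rw [h3, ← Finset.sum_add_distrib]

lemma cardA (k : ℕ) :
    ((univ ×ˢ univ).filter (fun x : Fin k × Fin k => x.1 < x.2)).card = k.choose 2 := by
  classical
  rw [Finset.card_filter]
  have hp := Finset.sum_product' (s := (univ : Finset (Fin k))) (t := (univ : Finset (Fin k)))
    (f := fun a b : Fin k => if a < b then (1:ℕ) else 0)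
  rw [hp, Finset.sum_comm]
  have h : ∀ j : Fin k, (∑ i : Fin k, if i < j then 1 else 0) = j.val := by
    intro j
    rw [← Finset.sum_filter]
    have : (univ.filter (fun i : Fin k => i < j)) = Finset.Iio j := by ext b; simp
    rw [this, Finset.sum_const, Fin.card_Iio, smul_eq_mul, mul_one]
  simp_rw [h]
  rw [Fin.sum_univ_eq_sum_range (fun i => i) k, Finset.sum_range_id, Nat.choose_two_right]

def Sym {k : ℕ} (q : Fin k → Fin k → ZMod 2) : Prop :=
  (∀ a, q a a = 0) ∧ (∀ a b, q a b = q b a)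

def triEquiv (k : ℕ) :
    {q : Fin k → Fin k → ZMod 2 // Sym q} ≃ ({x : Fin k × Fin k // x.1 < x.2} → ZMod 2) where
  toFun q := fun e => q.1 e.1.1 e.1.2
  invFun f := ⟨fun a b =>
      if h : a < b then f ⟨(a, b), h⟩ else if h : b < a then f ⟨(b, a), h⟩ else 0, by
    constructor
    · intro a; simp [lt_irrefl]
    · intro a b
      dsimp only
      rcases lt_trichotomy a b with h | h | h
      · rw [dif_pos h, dif_neg (not_lt_of_gt h), dif_pos h]
      · subst h; simp [lt_irrefl]
      · rw [dif_neg (not_lt_of_gt h), dif_pos h, dif_pos h]⟩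
  left_inv := by
    rintro ⟨q, hdiag, hsym⟩
    apply Subtype.ext
    funext a b
    dsimp only
    rcases lt_trichotomy a b with h | h | h
    · simp only [dif_pos h]
    · subst h; simp [lt_irrefl, hdiag a]
    · simp only [dif_neg (not_lt_of_gt h), dif_pos h, hsym a b]
  right_inv := by
    intro f
    funext e
    simp only [dif_pos e.2]

lemma count1 (k : ℕ) :
    Nat.card {q : Fin k → Fin k → ZMod 2 // Sym q} = 2 ^ k.choose 2 := by
  rw [Nat.card_congr (triEquiv k), Nat.card_fun, Nat.card_zmod]
  congr 1
  rw [Nat.card_eq_fintype_card, Fintype.card_subtype]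
  rw [show (univ : Finset (Fin k × Fin k)) = univ ×ˢ univ from rfl]
  exact cardA k

lemma fin_zero_ne_one (m : ℕ) : (0 : Fin (m+2)) ≠ 1 := by
  simp [Fin.ext_iff]

/-- the distinguished symmetric matrix with a single edge {0,1} -/
def e0 (m : ℕ) : Fin (m + 2) → Fin (m + 2) → ZMod 2 :=
  fun a b => if (a = 0 ∧ b = 1) ∨ (a = 1 ∧ b = 0) then 1 else 0

lemma e0_sym (m : ℕ) : Sym (e0 m) := by
  constructor
  · intro a
    simp only [e0, ite_eq_right_iff]
    rintro (⟨h1, h2⟩ | ⟨h1, h2⟩)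
    · rw [h1] at h2; exact absurd h2 (fin_zero_ne_one m)
    · rw [h1] at h2; exact absurd h2 (fin_zero_ne_one m).symm
  · intro a b
    simp only [e0]
    congr 1
    simp only [eq_iff_iff]
    tauto

lemma phi_e0 (m : ℕ) : ∑ b, e0 m 0 b = 1 := by
  have h : ∀ b : Fin (m + 2), e0 m 0 b = if b = 1 then 1 else 0 := by
    intro b
    by_cases hb : b = 1 <;> simp [e0, hb, fin_zero_ne_one m]
  simp_rw [h]
  rw [Finset.sum_ite_eq' univ (1 : Fin (m+2)) (fun _ => (1 : ZMod 2))]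
  simp

def halfEquiv (m : ℕ) :
    {q : Fin (m+2) → Fin (m+2) → ZMod 2 // Sym q ∧ ∑ b, q 0 b = 0} × ZMod 2 ≃
      {q : Fin (m+2) → Fin (m+2) → ZMod 2 // Sym q} where
  toFun := fun qx => ⟨fun a b => qx.1.1 a b + qx.2 * e0 m a b, by
    constructor
    · intro a; dsimp only; rw [qx.1.2.1.1 a, (e0_sym m).1 a, mul_zero, add_zero]
    · intro a b; dsimp only; rw [qx.1.2.1.2 a b, (e0_sym m).2 a b]⟩
  invFun := fun q =>
    (⟨fun a b => q.1 a b + (∑ b', q.1 0 b') * e0 m a b, by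
      refine ⟨⟨fun a => ?_, fun a b => ?_⟩, ?_⟩
      · dsimp only; rw [q.2.1 a, (e0_sym m).1 a, mul_zero, add_zero]
      · dsimp only; rw [q.2.2 a b, (e0_sym m).2 a b]
      · dsimp only
        rw [Finset.sum_add_distrib, ← Finset.mul_sum, phi_e0, mul_one]
        exact CharTwo.add_self_eq_zero _⟩, ∑ b', q.1 0 b')
  left_inv := by
    rintro ⟨⟨q, hq, hq0⟩, x⟩
    have hsum : ∑ b', (q 0 b' + x * e0 m 0 b') = x := by
      rw [Finset.sum_add_distrib, hq0, ← Finset.mul_sum, phi_e0, mul_one, zero_add]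
    refine Prod.ext ?_ ?_
    · apply Subtype.ext
      funext a b
      dsimp only
      rw [hsum, add_assoc, CharTwo.add_self_eq_zero, add_zero]
    · exact hsum
  right_inv := by
    rintro ⟨q, hq⟩
    apply Subtype.ext
    funext a b
    dsimp only
    rw [add_assoc, CharTwo.add_self_eq_zero, add_zero]

lemma count2 (m : ℕ) :
    Nat.card {q : Fin (m+2) → Fin (m+2) → ZMod 2 // Sym q ∧ ∑ b, q 0 b = 0} =
      2 ^ ((m+2).choose 2 - 1) := by
  have hc : (m+2).choose 2 = ((m+2).choose 2 - 1) + 1 := by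
    have : 0 < (m+2).choose 2 := Nat.choose_pos (by omega : 2 ≤ m+2)
    omega
  have h : 2 ^ ((m+2).choose 2) =
      Nat.card {q : Fin (m+2) → Fin (m+2) → ZMod 2 // Sym q ∧ ∑ b, q 0 b = 0} * 2 := calc
    2 ^ ((m+2).choose 2)
        = Nat.card {q : Fin (m+2) → Fin (m+2) → ZMod 2 // Sym q} := (count1 (m+2)).symm
    _ = Nat.card ({q : Fin (m+2) → Fin (m+2) → ZMod 2 // Sym q ∧ ∑ b, q 0 b = 0} × ZMod 2) :=
        (Nat.card_congr (halfEquiv m)).symm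
    _ = Nat.card {q : Fin (m+2) → Fin (m+2) → ZMod 2 // Sym q ∧ ∑ b, q 0 b = 0} *
        Nat.card (ZMod 2) := Nat.card_prod _ _
    _ = Nat.card {q : Fin (m+2) → Fin (m+2) → ZMod 2 // Sym q ∧ ∑ b, q 0 b = 0} * 2 := by
        rw [Nat.card_zmod]
  rw [hc, pow_succ] at h
  exact (Nat.eq_of_mul_eq_mul_right (by norm_num) h.symm)
variable {m : ℕ}

def eps (m : ℕ) : ZMod 2 := ((m+2).choose 2 : ZMod 2)

def dg (q : Fin (m+2) → Fin (m+2) → ZMod 2) (a : Fin (m+2)) : ZMod 2 := ∑ b, q a b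

def cc (q : Fin (m+2) → Fin (m+2) → ZMod 2) : ZMod 2 := dg q 0 + eps m

def TT (q : Fin (m+2) → Fin (m+2) → ZMod 2) (a : Fin (m+2)) : ZMod 2 :=
  ((a.val + 1 : ℕ) : ZMod 2) * eps m + cc q + dg q a

def PP (q : Fin (m+2) → Fin (m+2) → ZMod 2) : Fin (m+2+1) → Fin (m+2+1) → ZMod 2 :=
  fun i j =>
    if hi : i = 0 then (if hj : j = 0 then 0 else TT q (j.pred hj))
    else if hj : j = 0 then TT q (i.pred hi) + eps m
    else q (i.pred hi) (j.pred hj) + (if j < i then eps m else 0)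

@[simp] lemma PP_zero_zero (q : Fin (m+2) → Fin (m+2) → ZMod 2) : PP q 0 0 = 0 := by
  simp [PP]

@[simp] lemma PP_zero_succ (q : Fin (m+2) → Fin (m+2) → ZMod 2) (b : Fin (m+2)) :
    PP q 0 b.succ = TT q b := by
  simp [PP, Fin.succ_ne_zero, Fin.pred_succ]

@[simp] lemma PP_succ_zero (q : Fin (m+2) → Fin (m+2) → ZMod 2) (a : Fin (m+2)) :
    PP q a.succ 0 = TT q a + eps m := by
  simp [PP, Fin.succ_ne_zero, Fin.pred_succ]

@[simp] lemma PP_succ_succ (q : Fin (m+2) → Fin (m+2) → ZMod 2) (a b : Fin (m+2)) :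
    PP q a.succ b.succ = q a b + (if b < a then eps m else 0) := by
  simp [PP, Fin.succ_ne_zero, Fin.pred_succ, Fin.succ_lt_succ_iff]

lemma one_eq_succ_zero : (1 : Fin (m+2+1)) = Fin.succ 0 := by
  ext; simp

lemma sq_eps : eps m * eps m = eps m := by
  have h : ∀ e : ZMod 2, e * e = e := by decide
  exact h _

lemma rowsum_succ (q : Fin (m+2) → Fin (m+2) → ZMod 2) (a : Fin (m+2)) :
    ∑ j, PP q a.succ j = cc q := by
  rw [Fin.sum_univ_succ]
  simp only [PP_succ_zero, PP_succ_succ]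
  rw [Finset.sum_add_distrib, sum_ite_lt]
  have hdg : ∑ b, q a b = dg q a := rfl
  rw [hdg]
  have key : ∀ X e c d : ZMod 2, ((X + 1) * e + c + d + e) + (d + X * e) = c := by decide
  have hcast : ((a.val + 1 : ℕ) : ZMod 2) = (a.val : ZMod 2) + 1 := by push_cast; ring
  rw [TT, hcast]
  linear_combination key (a.val : ZMod 2) (eps m) (cc q) (dg q a)

lemma sum_dg (q : Fin (m+2) → Fin (m+2) → ZMod 2) (hq : Sym q) :
    ∑ b, dg q b = 0 := by
  simp only [dg]
  rw [pairsum _ hq.1]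
  apply Finset.sum_eq_zero
  intro x _
  rw [hq.2 x.1 x.2]
  exact CharTwo.add_self_eq_zero _

lemma cast_sum_succ : (∑ b : Fin (m+2), ((b.val + 1 : ℕ) : ZMod 2)) =
    (((m+2).choose 2 + (m+2) : ℕ) : ZMod 2) := by
  rw [← Nat.cast_sum]
  congr 1
  rw [Fin.sum_univ_eq_sum_range (fun i => i + 1) (m+2), Finset.sum_add_distrib,
    Finset.sum_range_id, Nat.choose_two_right, Finset.sum_const, Finset.card_range,
    smul_eq_mul, mul_one]

lemma rowsum_zero (q : Fin (m+2) → Fin (m+2) → ZMod 2) (hq : Sym q)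
    (h0 : Even (m+2) → dg q 0 = 0) :
    ∑ j, PP q 0 j = cc q := by
  rw [Fin.sum_univ_succ]
  simp only [PP_zero_zero, PP_zero_succ, zero_add]
  simp only [TT]
  rw [Finset.sum_add_distrib, Finset.sum_add_distrib, sum_dg q hq, add_zero,
    Finset.sum_const, Finset.card_univ, Fintype.card_fin, nsmul_eq_mul]
  rw [← Finset.sum_mul, cast_sum_succ]
  push_cast
  have hepsdef : ((((m:ℕ)+2).choose 2 : ℕ) : ZMod 2) = eps m := rfl
  rw [hepsdef]
  rcases Nat.even_or_odd m with he | ho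
  · have hd0 : dg q 0 = 0 := h0 (by obtain ⟨t, rfl⟩ := he; exact ⟨t+1, by ring⟩)
    have hm2 : ((m : ℕ) : ZMod 2) + 2 = 0 := by
      obtain ⟨t, rfl⟩ := he
      push_cast
      ring_nf
      have : (2 : ZMod 2) = 0 := by decide
      rw [this]; ring
    rw [cc, hd0, zero_add]
    have key : ∀ e k : ZMod 2, k = 0 → (e + k) * e + k * e = e := by decide
    linear_combination key (eps m) (((m:ℕ) : ZMod 2) + 2) hm2
  · have hm2 : ((m : ℕ) : ZMod 2) + 2 = 1 := by
      obtain ⟨t, rfl⟩ := ho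
      push_cast
      have : (2 : ZMod 2) = 0 := by decide
      rw [this]; ring
    have key : ∀ e c k : ZMod 2, k = 1 → (e + k) * e + k * c = c := by decide
    linear_combination key (eps m) (cc q) (((m:ℕ) : ZMod 2) + 2) hm2
def Cond (p : Fin (m+2+1) → Fin (m+2+1) → ZMod 2) : Prop :=
  (∀ i, p i i = 0) ∧
  (∀ i j : Fin (m+2+1), i ≠ j → p j i = p i j + (((m+2).choose 2 : ℕ) : ZMod 2)) ∧
  p 0 1 = 0 ∧
  (∀ i j : Fin (m+2+1), (∑ c, p i c) = (∑ c, p j c))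

lemma eps_def : (((m+2).choose 2 : ℕ) : ZMod 2) = eps m := rfl

lemma PP_mem (q : Fin (m+2) → Fin (m+2) → ZMod 2) (hq : Sym q)
    (h0 : Even (m+2) → dg q 0 = 0) : Cond (PP q) := by
  refine ⟨?_, ?_, ?_, ?_⟩
  · intro i
    cases i using Fin.cases with
    | zero => exact PP_zero_zero q
    | succ a => rw [PP_succ_succ, hq.1 a, if_neg (lt_irrefl a), add_zero]
  · intro i j hne
    rw [eps_def]
    cases i using Fin.cases with
    | zero =>
      cases j using Fin.cases with
      | zero => exact absurd rfl hne
      | succ b => rw [PP_succ_zero, PP_zero_succ]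
    | succ a =>
      cases j using Fin.cases with
      | zero => rw [PP_zero_succ, PP_succ_zero, add_assoc, CharTwo.add_self_eq_zero, add_zero]
      | succ b =>
        have hab : b ≠ a := fun h => hne (by rw [h])
        rw [PP_succ_succ, PP_succ_succ, hq.2 b a]
        rcases lt_or_gt_of_ne hab with h | h
        · rw [if_neg (not_lt_of_gt h), if_pos h, add_zero, add_assoc,
            CharTwo.add_self_eq_zero, add_zero]
        · rw [if_pos h, if_neg (not_lt_of_gt h), add_zero]
  · rw [one_eq_succ_zero, PP_zero_succ, TT]
    have h1 : (((0 : Fin (m+2)).val + 1 : ℕ) : ZMod 2) = 1 := by simp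
    rw [h1, one_mul, cc]
    have key : ∀ e d : ZMod 2, e + (d + e) + d = 0 := by decide
    exact key _ _
  · have hall : ∀ i, ∑ c, PP q i c = cc q := by
      intro i
      cases i using Fin.cases with
      | zero => exact rowsum_zero q hq h0
      | succ a => exact rowsum_succ q a
    intro i j; rw [hall i, hall j]

def qOf (p : Fin (m+2+1) → Fin (m+2+1) → ZMod 2) : Fin (m+2) → Fin (m+2) → ZMod 2 :=
  fun a b => if a < b then p a.succ b.succ else if b < a then p b.succ a.succ else 0

lemma qOf_sym (p : Fin (m+2+1) → Fin (m+2+1) → ZMod 2) : Sym (qOf p) := by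
  constructor
  · intro a; simp [qOf, lt_irrefl]
  · intro a b
    rcases lt_trichotomy a b with h | h | h
    · simp only [qOf]
      rw [if_pos h, if_neg (not_lt_of_gt h), if_pos h]
    · subst h; rfl
    · simp only [qOf]
      rw [if_neg (not_lt_of_gt h), if_pos h, if_pos h]

lemma qOf_eq (p : Fin (m+2+1) → Fin (m+2+1) → ZMod 2) (hc : Cond p) (a b : Fin (m+2)) :
    qOf p a b = p a.succ b.succ + (if b < a then eps m else 0) := by
  rcases lt_trichotomy a b with h | h | h
  · simp only [qOf]
    rw [if_pos h, if_neg (not_lt_of_gt h), add_zero]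
  · subst h
    simp only [qOf]
    rw [if_neg (lt_irrefl a), if_neg (lt_irrefl a), hc.1 a.succ, if_neg (lt_irrefl a), add_zero]
  · simp only [qOf]
    rw [if_neg (not_lt_of_gt h), if_pos h, if_pos h]
    have := hc.2.1 a.succ b.succ (fun hh => (ne_of_lt h).symm (Fin.succ_injective _ hh))
    rw [eps_def] at this
    exact this

lemma dg_qOf (p : Fin (m+2+1) → Fin (m+2+1) → ZMod 2) (hc : Cond p) (b : Fin (m+2)) :
    dg (qOf p) b = (∑ j, p 0 j) + p 0 b.succ + ((b.val + 1 : ℕ) : ZMod 2) * eps m := by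
  rw [dg]
  simp_rw [qOf_eq p hc b]
  rw [Finset.sum_add_distrib, sum_ite_lt]
  have e1 : ∑ j, p b.succ j = p b.succ 0 + ∑ b' : Fin (m+2), p b.succ b'.succ :=
    Fin.sum_univ_succ (f := fun j => p b.succ j)
  have e2 : ∑ j, p b.succ j = ∑ j, p 0 j := hc.2.2.2 b.succ 0
  have e3 : p b.succ 0 = p 0 b.succ + eps m := by
    have := hc.2.1 0 b.succ (Fin.succ_ne_zero b).symm
    rw [eps_def] at this
    exact this
  have hx : ∀ x : ZMod 2, x + x = 0 := fun x => CharTwo.add_self_eq_zero x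
  have hcast : ((b.val + 1 : ℕ) : ZMod 2) = (b.val : ZMod 2) + 1 := by push_cast; ring
  rw [hcast]
  linear_combination e2 - e1 - e3 - hx (p 0 b.succ) - hx (eps m)

lemma cc_qOf (p : Fin (m+2+1) → Fin (m+2+1) → ZMod 2) (hc : Cond p) :
    cc (qOf p) = ∑ j, p 0 j := by
  rw [cc, dg_qOf p hc 0, show Fin.succ (0 : Fin (m+2)) = 1 from one_eq_succ_zero.symm,
    hc.2.2.1]
  have h1 : (((0 : Fin (m+2)).val + 1 : ℕ) : ZMod 2) = 1 := by simp
  rw [h1, one_mul, add_zero, add_assoc, CharTwo.add_self_eq_zero, add_zero]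

lemma TT_qOf (p : Fin (m+2+1) → Fin (m+2+1) → ZMod 2) (hc : Cond p) (b : Fin (m+2)) :
    TT (qOf p) b = p 0 b.succ := by
  rw [TT, dg_qOf p hc b, cc_qOf p hc]
  have hx : ∀ x : ZMod 2, x + x = 0 := fun x => CharTwo.add_self_eq_zero x
  linear_combination hx (∑ j, p 0 j) + hx (((b.val + 1 : ℕ) : ZMod 2) * eps m)

lemma S_eq (p : Fin (m+2+1) → Fin (m+2+1) → ZMod 2) (hc : Cond p) (he : Even (m+2)) :
    (∑ j, p 0 j) = eps m := by
  have h1 : ∑ i, ∑ j, p i j = ((m+2+1).choose 2) • eps m := by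
    rw [pairsum _ hc.1]
    have hcongr : ∀ x ∈ (univ ×ˢ univ).filter
        (fun x : Fin (m+2+1) × Fin (m+2+1) => x.1 < x.2),
        p x.1 x.2 + p x.2 x.1 = eps m := by
      intro x hx
      have hlt : x.1 < x.2 := (Finset.mem_filter.mp hx).2
      have h := hc.2.1 x.1 x.2 (ne_of_lt hlt)
      rw [eps_def] at h
      rw [h, ← add_assoc, CharTwo.add_self_eq_zero, zero_add]
    rw [Finset.sum_congr rfl hcongr, Finset.sum_const, cardA]
  have h2 : ∑ i, ∑ j, p i j = (m+2+1) • (∑ j, p 0 j) := by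
    have hcongr : ∀ i ∈ (univ : Finset (Fin (m+2+1))), ∑ j, p i j = ∑ j, p 0 j :=
      fun i _ => hc.2.2.2 i 0
    rw [Finset.sum_congr rfl hcongr, Finset.sum_const, Finset.card_univ, Fintype.card_fin]
  rw [h2] at h1
  rw [nsmul_eq_mul, nsmul_eq_mul] at h1
  obtain ⟨t, ht⟩ := he
  have hodd : ((m+2+1 : ℕ) : ZMod 2) = 1 := by
    have : m + 2 + 1 = 2 * t + 1 := by omega
    rw [this]
    push_cast
    have h2z : (2 : ZMod 2) = 0 := by decide
    rw [h2z]; ring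
  have hC : (((m+2+1).choose 2 : ℕ) : ZMod 2) = eps m := by
    rw [show (m+2+1).choose 2 = (m+2).choose 1 + (m+2).choose 2 from
      Nat.choose_succ_succ (m+2) 1]
    rw [Nat.choose_one_right, Nat.cast_add, eps_def]
    have hz : ((m+2 : ℕ) : ZMod 2) = 0 := by
      have : m + 2 = 2 * t := by omega
      rw [this]
      push_cast
      have h2z : (2 : ZMod 2) = 0 := by decide
      rw [h2z]; ring
    rw [hz, zero_add]
  rw [hodd, hC, one_mul, sq_eps] at h1
  exact h1

lemma qOf_mem (p : Fin (m+2+1) → Fin (m+2+1) → ZMod 2) (hc : Cond p) :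
    Sym (qOf p) ∧ (Even (m+2) → dg (qOf p) 0 = 0) := by
  refine ⟨qOf_sym p, fun he => ?_⟩
  rw [dg_qOf p hc 0, show Fin.succ (0 : Fin (m+2)) = 1 from one_eq_succ_zero.symm,
    hc.2.2.1, S_eq p hc he]
  have h1 : (((0 : Fin (m+2)).val + 1 : ℕ) : ZMod 2) = 1 := by simp
  rw [h1, one_mul, add_zero]
  exact CharTwo.add_self_eq_zero _

lemma PP_qOf (p : Fin (m+2+1) → Fin (m+2+1) → ZMod 2) (hc : Cond p) : PP (qOf p) = p := by
  funext i j
  cases i using Fin.cases with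
  | zero =>
    cases j using Fin.cases with
    | zero => rw [PP_zero_zero, hc.1 0]
    | succ b => rw [PP_zero_succ, TT_qOf p hc b]
  | succ a =>
    cases j using Fin.cases with
    | zero =>
      rw [PP_succ_zero, TT_qOf p hc a]
      have := hc.2.1 0 a.succ (Fin.succ_ne_zero a).symm
      rw [eps_def] at this
      exact this.symm
    | succ b =>
      rw [PP_succ_succ, qOf_eq p hc a b, add_assoc, CharTwo.add_self_eq_zero, add_zero]

lemma qOf_PP (q : Fin (m+2) → Fin (m+2) → ZMod 2) (hq : Sym q) : qOf (PP q) = q := by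
  funext a b
  rcases lt_trichotomy a b with h | h | h
  · simp only [qOf]
    rw [if_pos h, PP_succ_succ, if_neg (not_lt_of_gt h), add_zero]
  · subst h
    simp only [qOf]
    rw [if_neg (lt_irrefl a), if_neg (lt_irrefl a), hq.1 a]
  · simp only [qOf]
    rw [if_neg (not_lt_of_gt h), if_pos h, PP_succ_succ, if_neg (not_lt_of_gt h),
      add_zero, hq.2 b a]

def mainEquiv (m : ℕ) :
    {p : Fin (m+2+1) → Fin (m+2+1) → ZMod 2 // Cond p} ≃
      {q : Fin (m+2) → Fin (m+2) → ZMod 2 // Sym q ∧ (Even (m+2) → dg q 0 = 0)} where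
  toFun p := ⟨qOf p.1, qOf_mem p.1 p.2⟩
  invFun q := ⟨PP q.1, PP_mem q.1 q.2.1 q.2.2⟩
  left_inv p := Subtype.ext (PP_qOf p.1 p.2)
  right_inv q := Subtype.ext (qOf_PP q.1 q.2.1)

lemma mainCount (m : ℕ) :
    Nat.card {p : Fin (m+2+1) → Fin (m+2+1) → ZMod 2 // Cond p} =
      if Odd (m+2) then 2 ^ (m+2).choose 2 else 2 ^ ((m+2).choose 2 - 1) := by
  rw [Nat.card_congr (mainEquiv m)]
  rcases Nat.even_or_odd (m+2) with he | ho
  · rw [if_neg (Nat.not_odd_iff_even.mpr he)]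
    have e2 : {q : Fin (m+2) → Fin (m+2) → ZMod 2 // Sym q ∧ (Even (m+2) → dg q 0 = 0)} ≃
        {q : Fin (m+2) → Fin (m+2) → ZMod 2 // Sym q ∧ ∑ b, q 0 b = 0} :=
      Equiv.subtypeEquivRight (fun q => by
        constructor
        · rintro ⟨hs, himp⟩; exact ⟨hs, himp he⟩
        · rintro ⟨hs, h⟩; exact ⟨hs, fun _ => h⟩)
    rw [Nat.card_congr e2]
    exact count2 m
  · rw [if_pos ho]
    have e2 : {q : Fin (m+2) → Fin (m+2) → ZMod 2 // Sym q ∧ (Even (m+2) → dg q 0 = 0)} ≃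
        {q : Fin (m+2) → Fin (m+2) → ZMod 2 // Sym q} :=
      Equiv.subtypeEquivRight (fun q => by
        constructor
        · exact fun h => h.1
        · intro h
          exact ⟨h, fun he => absurd ho (Nat.not_odd_iff_even.mpr he)⟩)
    rw [Nat.card_congr e2]
    exact count1 (m+2)
end Stmt8Aux

/-- The number of PP-plausible τ-parities for an `OA(n+1,n)`, counted via
standardised σ-parities `p : [1,n+1]² → Z₂` (with `p i i = 0`,
`p j i = p i j + C(n,2)`, the standardisation `p 1 2 = 0`, and all row sums of
the same parity), is `2^C(n,2)` if `n` is odd and `2^(C(n,2)-1)` if `n` is even. -/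
theorem stmt8 (n : ℕ) (hn : 2 ≤ n) :
    Nat.card {p : Fin (n + 1) → Fin (n + 1) → ZMod 2 //
      (∀ i, p i i = 0) ∧
      (∀ i j : Fin (n + 1), i ≠ j → p j i = p i j + (n.choose 2 : ZMod 2)) ∧
      p 0 1 = 0 ∧
      (∀ i j : Fin (n + 1), (∑ c, p i c) = (∑ c, p j c))} =
    if Odd n then 2 ^ n.choose 2 else 2 ^ (n.choose 2 - 1) := by
  obtain ⟨m, rfl⟩ : ∃ m, n = m + 2 := ⟨n - 2, by omega⟩
  exact Stmt8Aux.mainCount m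
end

section
/- Let k ≥ 4 and let x ↦ π(σ_x) ∈ Z₂ be a σ-parity function on ordered pairs of distinct elements of [1,k] with τ^c_{ij} := π(σ_{ci}) + π(σ_{cj}). Suppose the Latin squares determined by columns (1,2,3) and (1,2,4) are both equiparity, i.e., τ^1_{23} = τ^2_{13} = τ^3_{12} and τ^1_{24} = τ^2_{14} = τ^4_{12}, with each triple summing to C(n,2) ≡ 1 (mod 2) (so n ≡ 2,3 mod 4 and all three parities equal 1). Then τ^1_{34} = 0 and τ^2_{34} = 0; consequently neither the Latin square from columns (1,3,4) nor from columns (2,3,4) is of parity type 111. -/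
/-- If the Latin squares given by columns `(c₁,c₂,c₃)` and `(c₁,c₂,c₄)` of an OA
are both of parity type `111` (where `τ^c_{ij} = π(σ_{ci}) + π(σ_{cj})`), then
`τ^{c₁}_{c₃c₄} = τ^{c₂}_{c₃c₄} = 0`; consequently neither the square from
`(c₁,c₃,c₄)` nor the one from `(c₂,c₃,c₄)` has parity type `111`. -/
theorem stmt9 (k : ℕ) (hk : 4 ≤ k) (p : Fin k → Fin k → ZMod 2)
    (c₁ c₂ c₃ c₄ : Fin k)
    (h12 : c₁ ≠ c₂) (h13 : c₁ ≠ c₃) (h14 : c₁ ≠ c₄)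
    (h23 : c₂ ≠ c₃) (h24 : c₂ ≠ c₄) (h34 : c₃ ≠ c₄)
    (ha1 : p c₁ c₂ + p c₁ c₃ = 1) (ha2 : p c₂ c₁ + p c₂ c₃ = 1)
    (ha3 : p c₃ c₁ + p c₃ c₂ = 1)
    (hb1 : p c₁ c₂ + p c₁ c₄ = 1) (hb2 : p c₂ c₁ + p c₂ c₄ = 1)
    (hb3 : p c₄ c₁ + p c₄ c₂ = 1) :
    p c₁ c₃ + p c₁ c₄ = 0 ∧ p c₂ c₃ + p c₂ c₄ = 0 ∧
    ¬(p c₁ c₃ + p c₁ c₄ = 1 ∧ p c₃ c₁ + p c₃ c₄ = 1 ∧ p c₄ c₁ + p c₄ c₃ = 1) ∧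
    ¬(p c₂ c₃ + p c₂ c₄ = 1 ∧ p c₃ c₂ + p c₃ c₄ = 1 ∧ p c₄ c₂ + p c₄ c₃ = 1) := by
  have two : (2 : ZMod 2) = 0 := rfl
  have h1 : p c₁ c₃ + p c₁ c₄ = 0 := by linear_combination ha1 + hb1 + (1 - p c₁ c₂) * two
  have h2 : p c₂ c₃ + p c₂ c₄ = 0 := by linear_combination ha2 + hb2 + (1 - p c₂ c₁) * two
  refine ⟨h1, h2, ?_, ?_⟩
  · rintro ⟨h, -⟩; rw [h1] at h; exact zero_ne_one h
  · rintro ⟨h, -⟩; rw [h2] at h; exact zero_ne_one h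
end

section
/- Let k ≥ 3 and suppose n ≡ 2 or 3 (mod 4). If x denotes the maximum possible number of equiparity Latin squares in the ensemble of an OA(k,n), then x ≤ (1/2)(k·⌊(k−1)/2⌋·⌈(k−1)/2⌉ − C(k,3)). In particular, x/C(k,3) ≤ 1/4 + O(1/k). -/
/-!
Count the edges of all `k` τ-graphs in two ways. Colouring `i ≠ v` by `p v i` makes `G_v` a
subgraph of the complete bipartite graph between the two colour classes, so it has at most
`⌊(k-1)/2⌋ * ⌈(k-1)/2⌉` edges. On the other hand, a triple `{a, b, c}` contributes its opposite
pair to some of `G_a`, `G_b`, `G_c`; since `C(n,2)` is odd, `p` is antisymmetric up to `1`, which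
forces the number of contributions to be odd: three for an equiparity triple and one otherwise.
Hence the total is `C(k,3) + 2x`.
-/

open Finset

lemma ZMod.add_eq_one_iff_ne {a b : ZMod 2} : a + b = 1 ↔ a ≠ b := by
  revert a b; decide

lemma Nat.choose_two_cast_zmod_two (n : ℕ) : (n.choose 2 : ZMod 2) = (n / 2 : ℕ) := by
  have := Choose.choose_modEq_choose_mod_mul_choose_div_nat (n := n) (k := 2) (p := 2)
  simpa using (ZMod.natCast_eq_natCast_iff _ _ _).mpr this

lemma Nat.mul_le_div_two_mul_succ_div_two (a b : ℕ) :
    a * b ≤ (a + b) / 2 * ((a + b + 1) / 2) := by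
  have := four_mul_le_sq_add a b
  rcases Nat.even_or_odd (a + b) with ⟨q, hq⟩ | ⟨q, hq⟩
  · rw [hq] at this ⊢
    rw [show (q + q) / 2 = q by omega, show (q + q + 1) / 2 = q by omega]
    nlinarith
  · rw [hq] at this ⊢
    rw [show (2 * q + 1) / 2 = q by omega, show (2 * q + 1 + 1) / 2 = q + 1 by omega]
    nlinarith

/-- Modulo `2` the three indicators add up to `∑_{pairs} (p i j + p j i) = 3 = 1`, so one or all
three of them are `1`. -/
lemma tau_indicator_sum_triple {α : Type*} {p : α → α → ZMod 2}
    (hp : ∀ i j, i ≠ j → p j i = p i j + 1) {a b c : α} (hab : a ≠ b) (hac : a ≠ c)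
    (hbc : b ≠ c) :
    ((if p a b + p a c = 1 then 1 else 0) + (if p b a + p b c = 1 then 1 else 0) +
        (if p c a + p c b = 1 then 1 else 0) : ℕ) =
      1 + 2 * if p a b + p a c = 1 ∧ p b a + p b c = 1 ∧ p c a + p c b = 1 then 1 else 0 := by
  rw [hp a b hab, hp a c hac, hp b c hbc]
  generalize p a b = x, p a c = y, p b c = z
  revert x y z
  decide

variable {α : Type*} [LinearOrder α]

lemma card_bichromatic_pairs_le (s : Finset α) (f : α → ZMod 2) :
    #((s ×ˢ s).filter fun q => q.1 < q.2 ∧ f q.1 ≠ f q.2) ≤ #s / 2 * ((#s + 1) / 2) := by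
  set A := s.filter (f · = 0)
  set B := s.filter (f · ≠ 0)
  have hAB : #A + #B = #s := card_filter_add_card_filter_not _
  calc _ ≤ #(A ×ˢ B) := card_le_card_of_surjOn (fun q => (min q.1 q.2, max q.1 q.2)) ?_
    _ = #A * #B := card_product A B
    _ ≤ _ := hAB ▸ Nat.mul_le_div_two_mul_succ_div_two _ _
  rintro ⟨i, j⟩ h
  simp only [coe_filter, mem_product] at h
  obtain ⟨⟨hi, hj⟩, hij, hf⟩ := h
  have two_colours : ∀ a b : ZMod 2, a ≠ b → a ≠ 0 → b = 0 := by decide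
  by_cases h0 : f i = 0
  · exact ⟨(i, j), by simp [A, B, hi, hj, h0, h0 ▸ hf.symm], by simp [hij.le]⟩
  · exact ⟨(j, i), by simp [A, B, hi, hj, h0, two_colours _ _ hf h0], by simp [hij.le]⟩

variable [Fintype α]

lemma card_strictTriples :
    #(univ.filter fun t : α × α × α => t.1 < t.2.1 ∧ t.2.1 < t.2.2) =
      (Fintype.card α).choose 3 := by
  rw [← card_univ, ← card_powersetCard]
  refine card_bij (fun t _ => {t.1, t.2.1, t.2.2}) ?_ ?_ ?_
  · rintro ⟨a, b, c⟩ h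
    simp only [mem_filter, mem_univ, true_and] at h
    simp only [mem_powersetCard, subset_univ, true_and]
    exact card_eq_three.mpr ⟨a, b, c, h.1.ne, (h.1.trans h.2).ne, h.2.ne, rfl⟩
  · rintro ⟨a, b, c⟩ h ⟨a', b', c'⟩ h' e
    simp only [mem_filter, mem_univ, true_and] at h h'
    simp only [Finset.ext_iff, mem_insert, mem_singleton] at e
    grind [e a, e b, e c, e a', e b', e c']
  · intro s hs
    simp only [mem_powersetCard, subset_univ, true_and] at hs
    set f := s.orderEmbOfFin hs
    refine ⟨(f 0, f 1, f 2), by simp [f.lt_iff_lt], ?_⟩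
    have mem_iff (x : α) : x ∈ s ↔ ∃ i, f i = x := by
      rw [← mem_coe, ← s.range_orderEmbOfFin hs, Set.mem_range]
    ext x
    simp [mem_iff, Fin.exists_fin_succ, eq_comm]

lemma sum_pairs_avoiding_eq_sum_strictTriples {M : Type*} [AddCommMonoid M]
    (g : α → α → α → M) :
    ∑ v, ∑ q ∈ univ.filter (fun q : α × α => q.1 < q.2 ∧ q.1 ≠ v ∧ q.2 ≠ v), g v q.1 q.2 =
      ∑ t ∈ univ.filter (fun t : α × α × α => t.1 < t.2.1 ∧ t.2.1 < t.2.2),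
        (g t.1 t.2.1 t.2.2 + g t.2.1 t.1 t.2.2 + g t.2.2 t.1 t.2.1) := by
  simp only [sum_filter, ← Fintype.sum_prod_type', sum_add_distrib]
  have split (v i j : α) :
      (if i < j ∧ i ≠ v ∧ j ≠ v then g v i j else 0) =
        (if v < i ∧ i < j then g v i j else 0) + (if i < v ∧ v < j then g v i j else 0) +
          (if i < j ∧ j < v then g v i j else 0) := by
    split_ifs <;> grind
  simp only [split, sum_add_distrib]
  refine congrArg₂ (· + ·) (congrArg₂ (· + ·) rfl ?_) ?_
  · exact Fintype.sum_equiv (.mk (fun t => (t.2.1, t.1, t.2.2)) (fun t => (t.2.1, t.1, t.2.2))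
      (fun _ => rfl) (fun _ => rfl) : α × α × α ≃ α × α × α) _ _ fun _ => rfl
  · exact Fintype.sum_equiv (.mk (fun t => (t.2.1, t.2.2, t.1)) (fun t => (t.2.2, t.1, t.2.1))
      (fun _ => rfl) (fun _ => rfl) : α × α × α ≃ α × α × α) _ _ fun _ => rfl

/-- The edge set of the τ-graph `G_v`, where `τ^v_{ij} = p v i + p v j`; the edge `{i, j}` is
listed as `(i, j)` with `i < j`. -/
def tauEdges (p : α → α → ZMod 2) (v : α) : Finset (α × α) :=
  univ.filter fun q => q.1 < q.2 ∧ q.1 ≠ v ∧ q.2 ≠ v ∧ p v q.1 + p v q.2 = 1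

/-- The triples `i < j < l` spanning an equiparity (type `111`) Latin square. -/
def equiparityTriples (p : α → α → ZMod 2) : Finset (α × α × α) :=
  univ.filter fun t => t.1 < t.2.1 ∧ t.2.1 < t.2.2 ∧
    p t.1 t.2.1 + p t.1 t.2.2 = 1 ∧ p t.2.1 t.1 + p t.2.1 t.2.2 = 1 ∧
    p t.2.2 t.1 + p t.2.2 t.2.1 = 1

lemma card_tauEdges_le (p : α → α → ZMod 2) (v : α) :
    #(tauEdges p v) ≤ (Fintype.card α - 1) / 2 * (Fintype.card α / 2) := by
  have hcard : #(univ.erase v) = Fintype.card α - 1 := card_erase_of_mem (mem_univ v)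
  have hpos : 0 < Fintype.card α := Fintype.card_pos_iff.mpr ⟨v⟩
  have heq : tauEdges p v =
      ((univ.erase v) ×ˢ (univ.erase v)).filter fun q => q.1 < q.2 ∧ p v q.1 ≠ p v q.2 := by
    ext q
    simp only [tauEdges, mem_filter, mem_univ, mem_product, mem_erase,
      ZMod.add_eq_one_iff_ne]
    tauto
  rw [heq]
  convert card_bichromatic_pairs_le _ (p v) using 3 <;> omega

lemma sum_card_tauEdges {p : α → α → ZMod 2} (hp : ∀ i j, i ≠ j → p j i = p i j + 1) :
    ∑ v, #(tauEdges p v) = (Fintype.card α).choose 3 + 2 * #(equiparityTriples p) := by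
  have htau (v : α) : tauEdges p v =
      (univ.filter fun q : α × α => q.1 < q.2 ∧ q.1 ≠ v ∧ q.2 ≠ v).filter
        fun q => p v q.1 + p v q.2 = 1 := by
    ext; simp [tauEdges, and_assoc]
  have hequi : equiparityTriples p =
      (univ.filter fun t : α × α × α => t.1 < t.2.1 ∧ t.2.1 < t.2.2).filter fun t =>
        p t.1 t.2.1 + p t.1 t.2.2 = 1 ∧ p t.2.1 t.1 + p t.2.1 t.2.2 = 1 ∧
          p t.2.2 t.1 + p t.2.2 t.2.1 = 1 := by
    ext; simp [equiparityTriples, and_assoc]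
  simp only [htau, card_filter]
  rw [sum_pairs_avoiding_eq_sum_strictTriples fun v i j => if p v i + p v j = 1 then 1 else 0,
    hequi, card_filter, ← card_strictTriples, card_eq_sum_ones, mul_sum, ← sum_add_distrib]
  refine sum_congr rfl fun t ht => ?_
  simp only [mem_filter, mem_univ, true_and] at ht
  exact tau_indicator_sum_triple hp ht.1.ne (ht.1.trans ht.2).ne ht.2.ne

theorem stmt10_general (k n : ℕ) (hn : n % 4 = 2 ∨ n % 4 = 3)
    (p : Fin k → Fin k → ZMod 2)
    (hanti : ∀ i j : Fin k, i ≠ j → p j i = p i j + (n.choose 2 : ZMod 2)) :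
    2 * (Finset.univ.filter (fun t : Fin k × Fin k × Fin k =>
        t.1 < t.2.1 ∧ t.2.1 < t.2.2 ∧
        p t.1 t.2.1 + p t.1 t.2.2 = 1 ∧
        p t.2.1 t.1 + p t.2.1 t.2.2 = 1 ∧
        p t.2.2 t.1 + p t.2.2 t.2.1 = 1)).card + k.choose 3 ≤
      k * ((k - 1) / 2) * (k / 2) := by
  have hodd : (n.choose 2 : ZMod 2) = 1 := by
    rw [Nat.choose_two_cast_zmod_two, ← ZMod.natCast_mod, show n / 2 % 2 = 1 by omega,
      Nat.cast_one]
  have hp : ∀ i j : Fin k, i ≠ j → p j i = p i j + 1 := hodd ▸ hanti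
  calc 2 * #(equiparityTriples p) + k.choose 3 = ∑ v, #(tauEdges p v) := by
        rw [sum_card_tauEdges hp, Fintype.card_fin, add_comm]
    _ ≤ ∑ _v : Fin k, (k - 1) / 2 * (k / 2) :=
        sum_le_sum fun v _ => by simpa using card_tauEdges_le p v
    _ = k * ((k - 1) / 2) * (k / 2) := by simp [mul_assoc]

/-- For `n ≡ 2,3 (mod 4)` and a σ-parity `p` with `p j i = p i j + C(n,2)`, the
number `x` of equiparity (type `111`) triples in the ensemble (with
`τ^c_{ij} = p c i + p c j`) satisfies
`x ≤ (1/2)(k·⌊(k−1)/2⌋·⌈(k−1)/2⌉ − C(k,3))`, stated as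
`2x + C(k,3) ≤ k·⌊(k−1)/2⌋·⌈(k−1)/2⌉`. -/
theorem stmt10 (k n : ℕ) (hk : 3 ≤ k) (hn : n % 4 = 2 ∨ n % 4 = 3)
    (p : Fin k → Fin k → ZMod 2)
    (hanti : ∀ i j : Fin k, i ≠ j → p j i = p i j + (n.choose 2 : ZMod 2)) :
    2 * (Finset.univ.filter (fun t : Fin k × Fin k × Fin k =>
        t.1 < t.2.1 ∧ t.2.1 < t.2.2 ∧
        p t.1 t.2.1 + p t.1 t.2.2 = 1 ∧
        p t.2.1 t.1 + p t.2.1 t.2.2 = 1 ∧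
        p t.2.2 t.1 + p t.2.2 t.2.1 = 1)).card + k.choose 3 ≤
      k * ((k - 1) / 2) * (k / 2) :=
  stmt10_general k n hn p hanti
end

section
/- Let n ≥ 2 and suppose μ : [1,n+1] → ℕ is a 'good' sequence, i.e., Σ_{i=1}^m μ_i ≤ n·m − C(m,2) for all m ∈ [1,n+1]. If μ_c = μ_{c+1} − 2 for some c ∈ [1,n], then the sequence obtained by swapping μ_c and μ_{c+1} is also good. -/
/-- If `μ₁, …, μ_{n+1}` is a good sequence (partial sums `Σ_{i=1}^m μ_i ≤ nm − C(m,2)`)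
and `μ_c = μ_{c+1} − 2` for some `c ∈ [1,n]`, then the sequence obtained by
interchanging `μ_c` and `μ_{c+1}` is also good. -/
theorem stmt11 (n : ℕ) (hn : 2 ≤ n) (μ : ℕ → ℕ)
    (hgood : ∀ m, 1 ≤ m → m ≤ n + 1 →
      ∑ i ∈ Finset.Icc 1 m, μ i ≤ n * m - m.choose 2)
    (c : ℕ) (hc1 : 1 ≤ c) (hc2 : c ≤ n) (hμ : μ c + 2 = μ (c + 1)) :
    ∀ m, 1 ≤ m → m ≤ n + 1 →
      ∑ i ∈ Finset.Icc 1 m,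
        (Function.update (Function.update μ c (μ (c + 1))) (c + 1) (μ c)) i ≤
      n * m - m.choose 2 := by
  intro m hm1 hm2
  set ν := Function.update (Function.update μ c (μ (c + 1))) (c + 1) (μ c) with hνdef
  have hne : c ≠ c + 1 := by omega
  have hν : ∀ i, i ≠ c → i ≠ c + 1 → ν i = μ i := by
    intro i h1 h2
    simp [hνdef, Function.update_of_ne h2, Function.update_of_ne h1]
  have hνc : ν c = μ (c + 1) := by
    simp [hνdef, Function.update_of_ne hne, Function.update_self]
  have hνc1 : ν (c + 1) = μ c := by simp [hνdef]
  have hB : ∀ k, k ≤ n + 1 → k.choose 2 ≤ n * k := by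
    intro k hk
    calc k.choose 2 = k * (k - 1) / 2 := Nat.choose_two_right k
      _ ≤ k * (k - 1) := Nat.div_le_self _ _
      _ ≤ k * n := Nat.mul_le_mul_left _ (by omega)
      _ = n * k := Nat.mul_comm _ _
  have hBm := hB m hm2
  have key : ∑ i ∈ Finset.Icc 1 m, ν i + m.choose 2 ≤ n * m := by
    rcases lt_trichotomy m c with h | h | h
    · have heq : ∑ i ∈ Finset.Icc 1 m, ν i = ∑ i ∈ Finset.Icc 1 m, μ i :=
        Finset.sum_congr rfl (fun i hi => by
          rw [Finset.mem_Icc] at hi; exact hν i (by omega) (by omega))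
      have := hgood m hm1 hm2
      omega
    · subst h
      have hcm : m ∈ Finset.Icc 1 m := by simp [Finset.mem_Icc]; omega
      have e1 := (Finset.add_sum_erase _ ν hcm).symm
      have e2 := (Finset.add_sum_erase _ μ hcm).symm
      have e3 : ∑ i ∈ (Finset.Icc 1 m).erase m, ν i = ∑ i ∈ (Finset.Icc 1 m).erase m, μ i :=
        Finset.sum_congr rfl (fun i hi => by
          rw [Finset.mem_erase, Finset.mem_Icc] at hi
          exact hν i hi.1 (by omega))
      have hsum : ∑ i ∈ Finset.Icc 1 m, ν i = ∑ i ∈ Finset.Icc 1 m, μ i + 2 := by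
        rw [e1, e2, e3, hνc]; omega
      by_cases hcase : n ≤ μ m + m
      · have h1 := hgood (m + 1) (by omega) (by omega)
        have hB1 := hB (m + 1) (by omega)
        have hS1 : ∑ i ∈ Finset.Icc 1 (m + 1), μ i = ∑ i ∈ Finset.Icc 1 m, μ i + μ (m + 1) :=
          Finset.sum_Icc_succ_top (by omega) μ
        have hch : (m + 1).choose 2 = m + m.choose 2 := by
          rw [Nat.choose_succ_succ, Nat.choose_one_right]
        have hmul : n * (m + 1) = n * m + n := by ring
        omega
      · obtain ⟨d, rfl⟩ : ∃ d, m = d + 1 := ⟨m - 1, by omega⟩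
        have hSd : ∑ i ∈ Finset.Icc 1 (d + 1), μ i = ∑ i ∈ Finset.Icc 1 d, μ i + μ (d + 1) :=
          Finset.sum_Icc_succ_top (by omega) μ
        have hGd : ∑ i ∈ Finset.Icc 1 d, μ i + d.choose 2 ≤ n * d := by
          rcases Nat.eq_zero_or_pos d with hd | hd
          · subst hd; simp
          · have := hgood d (by omega) (by omega)
            have := hB d (by omega)
            omega
        have hch : (d + 1).choose 2 = d + d.choose 2 := by
          rw [Nat.choose_succ_succ, Nat.choose_one_right]
        have hmul : n * (d + 1) = n * d + n := by ring
        omega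
    · have hcm : c ∈ Finset.Icc 1 m := by simp [Finset.mem_Icc]; omega
      have hc1m : c + 1 ∈ (Finset.Icc 1 m).erase c := by
        rw [Finset.mem_erase, Finset.mem_Icc]; omega
      have e1a := (Finset.add_sum_erase _ ν hcm).symm
      have e1b := (Finset.add_sum_erase _ ν hc1m).symm
      have e2a := (Finset.add_sum_erase _ μ hcm).symm
      have e2b := (Finset.add_sum_erase _ μ hc1m).symm
      have e3 : ∑ i ∈ ((Finset.Icc 1 m).erase c).erase (c + 1), ν i =
          ∑ i ∈ ((Finset.Icc 1 m).erase c).erase (c + 1), μ i :=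
        Finset.sum_congr rfl (fun i hi => by
          rw [Finset.mem_erase, Finset.mem_erase] at hi
          exact hν i hi.2.1 hi.1)
      have := hgood m hm1 hm2
      omega
  omega
end

section
/- Let n ≡ 2 (mod 4). Define the sequence μ₁ = μ₂ = μ₃ = n−1, μ₄ = n−3, and μ_i = μ_{i−4} − 4 for 4 < i ≤ n+1. Then for every m ∈ [1, n+1], writing m = 4α+β with β ∈ {0,1,2,3}, we have n·m − C(m,2) − 1 ≤ Σ_{i=1}^m μ_i ≤ n·m − C(m,2). In particular this sequence is 'good' and satisfies the greedy condition. -/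
private def cval (r : ℕ) : ℕ := if r = 1 then 0 else if r = 3 then 2 else 1

private def dval (r : ℕ) : ℕ := if r = 1 ∨ r = 2 then 1 else 0

/-- For `n ≡ 2 (mod 4)`, the sequence `μ₁ = μ₂ = μ₃ = n−1`, `μ₄ = n−3`,
`μ_i = μ_{i−4} − 4` for `4 < i ≤ n+1`, satisfies
`nm − C(m,2) − 1 ≤ Σ_{i=1}^m μ_i ≤ nm − C(m,2)` for all `m ∈ [1,n+1]`;
in particular it is good and greedy. -/
theorem stmt12 (n : ℕ) (hn : n % 4 = 2) (μ : ℕ → ℕ)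
    (h1 : μ 1 = n - 1) (h2 : μ 2 = n - 1) (h3 : μ 3 = n - 1) (h4 : μ 4 = n - 3)
    (hrec : ∀ i, 4 < i → i ≤ n + 1 → μ i = μ (i - 4) - 4) :
    ∀ m, 1 ≤ m → m ≤ n + 1 →
      n * m - m.choose 2 - 1 ≤ ∑ i ∈ Finset.Icc 1 m, μ i ∧
      ∑ i ∈ Finset.Icc 1 m, μ i ≤ n * m - m.choose 2 := by
  have muval : ∀ i, 1 ≤ i → i ≤ n + 1 → μ i + i = n + cval (i % 4) := by
    intro i
    induction i using Nat.strong_induction_on with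
    | _ i ih =>
      intro hi1 hi2
      rcases Nat.lt_or_ge i 5 with h5 | h5
      · interval_cases i <;> simp [h1, h2, h3, h4, cval] <;> omega
      · have hrec' := hrec i (by omega) hi2
        have hIH := ih (i - 4) (by omega) (by omega) (by omega)
        have hmod : (i - 4) % 4 = i % 4 := by omega
        rw [hmod] at hIH
        have hc : cval (i % 4) = 0 ∨ cval (i % 4) = 1 ∨ cval (i % 4) = 2 := by
          unfold cval; split <;> [left; split] <;> simp
        -- n + cval ≥ i, using n % 4 = 2 and the mod class of i
        have hbig : i ≤ n + cval (i % 4) := by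
          rcases Nat.lt_or_ge i (n + 1) with h | h
          · omega
          · have : i = n + 1 := by omega
            subst this
            have : (n + 1) % 4 = 3 := by omega
            rw [this]; simp [cval]
        omega
  have sumval : ∀ m, m ≤ n + 1 →
      (∑ i ∈ Finset.Icc 1 m, μ i) + dval (m % 4) + m.choose 2 = n * m := by
    intro m
    induction m with
    | zero => simp [dval]
    | succ m ihm =>
      intro hm
      rw [Finset.sum_Icc_succ_top (by omega)]
      have hmu := muval (m + 1) (by omega) hm
      have hch : (m + 1).choose 2 = m.choose 2 + m := by
        rw [Nat.choose_succ_succ]; simp [Nat.choose_one_right, Nat.add_comm]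
      have ihm' := ihm (by omega)
      have hd : ∀ r, r < 4 → (dval r = if r = 1 ∨ r = 2 then 1 else 0) := by
        intro r _; rfl
      have h1' := hd (m % 4) (by omega)
      have h2' := hd ((m + 1) % 4) (by omega)
      have hc1 : cval ((m + 1) % 4) = if (m+1) % 4 = 1 then 0 else if (m+1) % 4 = 3 then 2 else 1 := rfl
      rw [hch]
      -- turn ifs into case analysis
      rcases (by omega : m % 4 = 0 ∨ m % 4 = 1 ∨ m % 4 = 2 ∨ m % 4 = 3) with h | h | h | h <;>
        · have h' : (m + 1) % 4 = (m % 4 + 1) % 4 := by omega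
          have hmul : n * (m + 1) = n * m + n := by ring
          simp [h, h', cval, dval] at h1' h2' hc1 hmu ihm' ⊢
          omega
  intro m hm1 hm2
  have := sumval m hm2
  have hd : dval (m % 4) ≤ 1 := by unfold dval; split <;> omega
  omega
end

section
/- Suppose n ≡ 2 (mod 4) and μ₁,...,μ_{n+1} are odd positive integers, and let T = n·C(n+1,2) − Σ_{c=1}^{n+1} μ_c². If 2x + C(n+1,3) = T for a nonnegative integer x, then x ≡ (n+2)/4 (mod 4). -/
/-- Let `n ≡ 2 (mod 4)` and let `μ₁, …, μ_{n+1}` be odd (positive) integers.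
If `T = n·C(n+1,2) − Σ μ_c²` and `2x + C(n+1,3) = T`, then
`x ≡ (n+2)/4 (mod 4)`. -/
theorem stmt13 (n : ℕ) (hn : n % 4 = 2) (μ : Fin (n + 1) → ℕ)
    (hodd : ∀ c, Odd (μ c)) (hpos : ∀ c, 0 < μ c) (x : ℕ)
    (hx : 2 * (x : ℤ) + ((n + 1).choose 3 : ℤ) =
      (n : ℤ) * ((n + 1).choose 2 : ℤ) - ∑ c, (μ c : ℤ) ^ 2) :
    x % 4 = ((n + 2) / 4) % 4 := by
  obtain ⟨k, rfl⟩ : ∃ k, n = 4 * k + 2 := ⟨n / 4, by omega⟩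
  -- the sum of squares of odd numbers is n+1 mod 8
  have hdvd : (8 : ℤ) ∣ ∑ c : Fin (4 * k + 2 + 1), ((μ c : ℤ) ^ 2 - 1) := by
    apply Finset.dvd_sum
    intro c _
    obtain ⟨a, ha⟩ := hodd c
    have h2 : (2 : ℤ) ∣ (a : ℤ) * ((a : ℤ) + 1) := Int.even_mul_succ_self a |>.two_dvd
    obtain ⟨b, hb⟩ := h2
    refine ⟨b, ?_⟩
    have : (μ c : ℤ) = 2 * a + 1 := by exact_mod_cast ha
    rw [this]
    nlinarith [hb]
  obtain ⟨m, hm⟩ := hdvd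
  have hsum : ∑ c : Fin (4 * k + 2 + 1), (μ c : ℤ) ^ 2 = 8 * m + (4 * k + 3) := by
    have hs : ∑ c : Fin (4 * k + 2 + 1), ((μ c : ℤ) ^ 2 - 1)
        = (∑ c : Fin (4 * k + 2 + 1), (μ c : ℤ) ^ 2) - (4 * k + 3) := by
      rw [Finset.sum_sub_distrib]
      simp
      ring
    rw [hs] at hm
    linarith
  -- choose values via descFactorial
  have hd2 : (4 * k + 3).descFactorial 2 = (4 * k + 2) * (4 * k + 3) := by
    simp [Nat.descFactorial_succ]
  have hd3 : (4 * k + 3).descFactorial 3 = (4 * k + 1) * ((4 * k + 2) * (4 * k + 3)) := by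
    simp [Nat.descFactorial_succ]
  have hc2 : 2 * ((4 * k + 3).choose 2) = (4 * k + 2) * (4 * k + 3) := by
    have := Nat.descFactorial_eq_factorial_mul_choose (4 * k + 3) 2
    rw [hd2] at this
    simpa [Nat.factorial] using this.symm
  have hc3 : 6 * ((4 * k + 3).choose 3) = (4 * k + 1) * ((4 * k + 2) * (4 * k + 3)) := by
    have := Nat.descFactorial_eq_factorial_mul_choose (4 * k + 3) 3
    rw [hd3] at this
    simpa [Nat.factorial] using this.symm
  have hc2' : 2 * (((4 * k + 2 + 1).choose 2 : ℤ)) = (4 * k + 2) * (4 * k + 3) := by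
    exact_mod_cast congrArg (Nat.cast : ℕ → ℤ) hc2
  have hc3' : 6 * (((4 * k + 2 + 1).choose 3 : ℤ)) = (4 * k + 1) * ((4 * k + 2) * (4 * k + 3)) := by
    exact_mod_cast congrArg (Nat.cast : ℕ → ℤ) hc3
  -- divisibility: 3 ∣ k(k+1)(2k+1)
  have h3 : ∃ t : ℕ, k * (k + 1) * (2 * k + 1) = 3 * t := by
    obtain ⟨q, hq | hq | hq⟩ : ∃ q, k = 3 * q ∨ k = 3 * q + 1 ∨ k = 3 * q + 2 :=
      ⟨k / 3, by omega⟩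
    · exact ⟨q * (3 * q + 1) * (6 * q + 1), by subst hq; ring⟩
    · exact ⟨(3 * q + 1) * (3 * q + 2) * (2 * q + 1), by subst hq; ring⟩
    · exact ⟨(3 * q + 2) * (q + 1) * (6 * q + 5), by subst hq; ring⟩
  obtain ⟨t, ht⟩ := h3
  have ht' : (k : ℤ) * ((k : ℤ) + 1) * (2 * (k : ℤ) + 1) = 3 * (t : ℤ) := by
    exact_mod_cast congrArg (Nat.cast : ℕ → ℤ) ht
  -- main computation
  rw [hsum] at hx
  have key : 12 * (x : ℤ) = 12 * ((k : ℤ) + 1) + 4 * ((k : ℤ) * ((k : ℤ) + 1) * (2 * (k : ℤ) + 1)) * 4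
      + 96 * (k : ℤ) * ((k : ℤ) + 1) ^ 2 - 48 * m := by
    push_cast at hx ⊢
    push_cast at hc2' hc3'
    nlinarith [hx, hc2', hc3']
  rw [ht'] at key
  set w : ℤ := (t : ℤ) + 2 * (k : ℤ) * ((k : ℤ) + 1) ^ 2 - m with hwdef
  have hw : 12 * (x : ℤ) = 12 * ((k : ℤ) + 1 + 4 * w) := by
    rw [hwdef]; linear_combination key
  clear_value w
  omega
end

section
/- Suppose n ≡ 0 (mod 4) and μ₁,...,μ_{n+1} are even nonnegative integers with μ_c ≤ n for all c. Let T = Σ_{c=1}^{n+1} μ_c(n − μ_c) and suppose T = 2·C(n+1,3) − 2x for a nonnegative integer x. Then x is even and x ≥ n(n+1)(n−4)/24. -/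
/-- Let `n ≡ 0 (mod 4)` and let `μ₁, …, μ_{n+1}` be even with `μ_c ≤ n`.
If `T = Σ μ_c(n − μ_c)` satisfies `T = 2·C(n+1,3) − 2x`, then `x` is even and
`x ≥ n(n+1)(n−4)/24`. -/
theorem stmt14 (n : ℕ) (hn : n % 4 = 0) (μ : Fin (n + 1) → ℕ)
    (heven : ∀ c, Even (μ c)) (hle : ∀ c, μ c ≤ n) (x : ℕ)
    (hx : ((∑ c, μ c * (n - μ c) : ℕ) : ℤ) =
      2 * ((n + 1).choose 3 : ℤ) - 2 * (x : ℤ)) :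
    Even x ∧ n * (n + 1) * (n - 4) / 24 ≤ x := by
  set T : ℕ := ∑ c, μ c * (n - μ c) with hT
  set C : ℕ := (n + 1).choose 3 with hC
  have hneven : Even n := by
    rw [Nat.even_iff]; omega
  -- 4 divides T
  have hT4 : 4 ∣ T := by
    apply Finset.dvd_sum
    intro c _
    obtain ⟨a, ha⟩ := heven c
    have hsub : Even (n - μ c) := (Nat.even_sub (hle c)).mpr (by
      constructor <;> intro <;> [exact heven c; exact hneven])
    obtain ⟨b, hb⟩ := hsub
    rw [hb, ha]
    exact ⟨a * b, by ring⟩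
  -- 6 * C = (n+1) * n * (n-1)
  have h6 : C * 6 = (n + 1) * n * (n - 1) := by
    rw [hC, Nat.choose_eq_descFactorial_div_factorial,
      show Nat.factorial 3 = 6 from rfl,
      Nat.div_mul_cancel (show 6 ∣ _ from Nat.factorial_dvd_descFactorial _ 3)]
    cases n with
    | zero => simp
    | succ m => simp [Nat.descFactorial]; ring
  -- C is even
  have hCeven : Even C := by
    have h4 : 4 ∣ C * 6 := by
      rw [h6]
      exact Dvd.dvd.mul_right (Dvd.dvd.mul_left ⟨n / 4, by omega⟩ _) _
    obtain ⟨m, hm⟩ := h4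
    rw [Nat.even_iff]; omega
  obtain ⟨t, ht⟩ := hT4
  -- the nat version of hx
  have hnat : T + 2 * x = 2 * C := by
    have : (T : ℤ) + 2 * x = 2 * C := by linarith [hx]
    exact_mod_cast this
  obtain ⟨c0, hc0⟩ := hCeven
  have hxeven : Even x := by rw [Nat.even_iff]; omega
  refine ⟨hxeven, ?_⟩
  rcases Nat.eq_zero_or_pos n with h0 | hpos
  · subst h0; simp
  have hn4 : 4 ≤ n := by omega
  -- key bound: 4*T ≤ (n+1)*n*n  over ℤ
  have hTcast : (T : ℤ) = ∑ c, (μ c : ℤ) * ((n : ℤ) - μ c) := by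
    rw [hT]
    push_cast [Nat.cast_sub]
    exact Finset.sum_congr rfl fun c _ => by rw [Nat.cast_sub (hle c)]
  have hkey : 4 * (T : ℤ) ≤ (n + 1) * (n * n) := by
    rw [hTcast, Finset.mul_sum]
    calc ∑ c : Fin (n+1), 4 * ((μ c : ℤ) * ((n : ℤ) - μ c))
        ≤ ∑ c : Fin (n+1), (n : ℤ) * n := by
          apply Finset.sum_le_sum
          intro c _
          nlinarith [sq_nonneg ((n : ℤ) - 2 * μ c)]
      _ = (n + 1) * (n * n) := by
          rw [Finset.sum_const, Finset.card_univ, Fintype.card_fin]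
          ring
  -- goal in ℤ
  have hgoal : (n : ℕ) * (n + 1) * (n - 4) ≤ 24 * x := by
    have hcast : ((n * (n + 1) * (n - 4) : ℕ) : ℤ) = (n : ℤ) * (n + 1) * ((n : ℤ) - 4) := by
      push_cast [Nat.cast_sub hn4]; ring
    have h6' : (C : ℤ) * 6 = ((n : ℤ) + 1) * n * ((n : ℤ) - 1) := by
      have := h6
      have hcast2 : ((C * 6 : ℕ) : ℤ) = (((n + 1) * n * (n - 1) : ℕ) : ℤ) := by
        rw [this]
      push_cast [Nat.cast_sub (show 1 ≤ n by omega)] at hcast2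
      linarith
    have hx' : (T : ℤ) = 2 * C - 2 * x := hx
    have : (n : ℤ) * (n + 1) * ((n : ℤ) - 4) ≤ 24 * x := by nlinarith
    have := hcast ▸ this
    exact_mod_cast this
  calc n * (n + 1) * (n - 4) / 24 ≤ 24 * x / 24 := Nat.div_le_div_right hgoal
    _ = x := by omega
end
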